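/- arXiv:1903.12385 — 7 statements merged into one kernel-verified Lean document; each statement's English description precedes it below -/
import Mathlib

section
/- For any finite simple graph G, twice the fractional matching number of G is an integer; moreover there exists a maximum fractional matching f with f(e) ∈ {0, 1/2, 1} for every edge e. -/
open Finset

namespace SCF

variable {V : Type*}

/-- Degree of `v` in `F` (as the cardinality of its neighbor set). -/
noncomputable def deg [Fintype V] (F : SimpleGraph V) (v : V) : ℕ :=
  (F.neighborSet v).ncard

/-- Number of isolated vertices of `G - S`. -/
noncomputable def iso [Fintype V] (G : SimpleGraph V) (S : Set V) : ℕ :=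
  {v | v ∉ S ∧ ∀ w, G.Adj v w → w ∈ S}.ncard

/-- The component of `v` in `F` is a single edge `K_{1,1}`. -/
def IsK11Comp [Fintype V] (F : SimpleGraph V) (v : V) : Prop :=
  deg F v = 1 ∧ ∀ w, F.Adj v w → deg F w = 1

/-- The component of `v` in `F` is a path on three vertices `K_{1,2}`. -/
def IsK12Comp [Fintype V] (F : SimpleGraph V) (v : V) : Prop :=
  ∃ c a b, a ≠ b ∧ F.Adj c a ∧ F.Adj c b ∧ deg F c = 2 ∧ deg F a = 1 ∧ deg F b = 1 ∧
    (v = c ∨ v = a ∨ v = b)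

/-- The component of `v` in `F` is a cycle (2-regular connected, so length ≥ 3). -/
def IsCycleComp [Fintype V] (F : SimpleGraph V) (v : V) : Prop :=
  ∀ w, F.Reachable v w → deg F w = 2

/-- The component of `v` in `F` is an odd cycle. -/
def IsOddCycleComp [Fintype V] (F : SimpleGraph V) (v : V) : Prop :=
  IsCycleComp F v ∧ Odd {w | F.Reachable v w}.ncard

/-- The component of `v` in `F` is a star `K_{1,i}` for some `i ≥ 1`. -/
def IsStarComp [Fintype V] (F : SimpleGraph V) (v : V) : Prop :=
  ∃ c, (v = c ∨ F.Adj c v) ∧ 0 < deg F c ∧ ∀ w, F.Adj c w → deg F w = 1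

/-- The component of `v` in `F` is a star `K_{1,i}` with `1 ≤ i ≤ n`. -/
def IsStarAtMostComp [Fintype V] (F : SimpleGraph V) (n : ℕ) (v : V) : Prop :=
  ∃ c, (v = c ∨ F.Adj c v) ∧ 0 < deg F c ∧ deg F c ≤ n ∧ ∀ w, F.Adj c w → deg F w = 1

/-- `F` is a `{K_{1,1}, C_m : m ≥ 3}`-factor of `G`. -/
def IsK11CycleFactor [Fintype V] (G F : SimpleGraph V) : Prop :=
  F ≤ G ∧ ∀ v, IsK11Comp F v ∨ IsCycleComp F v

/-- `F` is a `{K_{1,1}, K_{1,2}, C_m : m ≥ 3}`-factor of `G`. -/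
def IsK11K12CycleFactor [Fintype V] (G F : SimpleGraph V) : Prop :=
  F ≤ G ∧ ∀ v, IsK11Comp F v ∨ IsK12Comp F v ∨ IsCycleComp F v

/-- Number of `K_{1,2}`-components of `F`, counted by their centers. -/
noncomputable def countK12 [Fintype V] (F : SimpleGraph V) : ℕ :=
  {v | deg F v = 2 ∧ ∀ w, F.Adj v w → deg F w = 1}.ncard

/-- `min(G, K_{1,2})`: the minimum number of `K_{1,2}`-components over all
`{K_{1,1}, K_{1,2}, C_m : m ≥ 3}`-factors of `G`. -/
noncomputable def minK12 [Fintype V] (G : SimpleGraph V) : ℕ :=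
  sInf {t | ∃ F, IsK11K12CycleFactor G F ∧ countK12 F = t}

/-- `f` is a fractional matching of `G`. -/
def IsFracMatching [Fintype V] [DecidableEq V] (G : SimpleGraph V) [DecidableRel G.Adj]
    (f : Sym2 V → ℝ) : Prop :=
  (∀ e, 0 ≤ f e ∧ f e ≤ 1) ∧ (∀ e, e ∉ G.edgeSet → f e = 0) ∧
    ∀ v : V, ∑ e ∈ G.edgeFinset, (if v ∈ e then f e else 0) ≤ 1

/-- Total weight of a fractional matching. -/
def weight [Fintype V] [DecidableEq V] (G : SimpleGraph V) [DecidableRel G.Adj]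
    (f : Sym2 V → ℝ) : ℝ :=
  ∑ e ∈ G.edgeFinset, f e

/-- The fractional matching number `μ_f(G)`. -/
noncomputable def nuF [Fintype V] [DecidableEq V] (G : SimpleGraph V) [DecidableRel G.Adj] : ℝ :=
  sSup (weight G '' {f | IsFracMatching G f})

/-- `f` is a maximum fractional matching of `G`. -/
def IsMaxFracMatching [Fintype V] [DecidableEq V] (G : SimpleGraph V) [DecidableRel G.Adj]
    (f : Sym2 V → ℝ) : Prop :=
  IsFracMatching G f ∧ weight G f = nuF G

/-- `s` is an independent set of vertices of `G`. -/
def IsIndepSet (G : SimpleGraph V) (s : Set V) : Prop :=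
  ∀ ⦃u⦄, u ∈ s → ∀ ⦃w⦄, w ∈ s → ¬ G.Adj u w

/-- The independence number `α(G)`. -/
noncomputable def alpha [Fintype V] (G : SimpleGraph V) : ℕ :=
  sSup {n | ∃ s : Set V, IsIndepSet G s ∧ s.ncard = n}

/-- `G` has a proper edge coloring with `k` colors. -/
def HasProperEdgeColoring (G : SimpleGraph V) (k : ℕ) : Prop :=
  ∃ c : Sym2 V → Fin k, ∀ e₁ ∈ G.edgeSet, ∀ e₂ ∈ G.edgeSet,
    e₁ ≠ e₂ → ∀ v : V, v ∈ e₁ → v ∈ e₂ → c e₁ ≠ c e₂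

/-- The chromatic index `χ'(G)`: the minimum number of colors (equivalently matchings)
needed to properly color the edges of `G`. -/
noncomputable def chromIdx (G : SimpleGraph V) : ℕ :=
  sInf {k | HasProperEdgeColoring G k}

/-- `G` is a `k`-critical graph. -/
def IsCriticalWith [Fintype V] (G : SimpleGraph V) [DecidableRel G.Adj] (k : ℕ) : Prop :=
  2 ≤ k ∧ G.maxDegree = k ∧ chromIdx G = k + 1 ∧
    ∀ H : SimpleGraph V, H < G → chromIdx H ≤ k

/-- `G` is an edge-chromatic critical graph. -/
def IsCritical [Fintype V] (G : SimpleGraph V) [DecidableRel G.Adj] : Prop :=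
  ∃ k, IsCriticalWith G k

/-- `G` is factor-critical: deleting any vertex leaves a graph with a perfect matching. -/
def IsFactorCritical (G : SimpleGraph V) : Prop :=
  ∀ v : V, ∃ M : G.Subgraph, M.verts = {v}ᶜ ∧ M.IsMatching

end SCF

open SCF

/-!
A fractional matching `f` extends to a symmetric doubly stochastic matrix by putting the slack
`1 - ∑_{e ∋ u} f e` of each vertex on the diagonal. By Birkhoff's theorem this matrix is a convex
combination of permutation matrices. Symmetrising a matrix and restricting it to the edges is
linear, recovers `f` from its extension, and turns every doubly stochastic matrix into a fractional
matching; so some permutation matrix gives a fractional matching of weight at least that of `f`,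
and a symmetrised permutation matrix takes only the values `0`, `1/2` and `1`.
-/

namespace SCF

variable {V : Type*} {G : SimpleGraph V} [DecidableRel G.Adj]

variable (G) in
noncomputable def edgeAverage (M : Matrix V V ℝ) : Sym2 V → ℝ :=
  Sym2.lift ⟨fun u v => if G.Adj u v then (M u v + M v u) / 2 else 0, fun u v => by
    simp only [G.adj_comm, add_comm]⟩

@[simp]
lemma edgeAverage_mk (M : Matrix V V ℝ) (u v : V) :
    edgeAverage G M s(u, v) = if G.Adj u v then (M u v + M v u) / 2 else 0 :=
  rfl

lemma edgeAverage_mem_of_zero_or_one {M : Matrix V V ℝ} (hM : ∀ u v, M u v = 0 ∨ M u v = 1)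
    (e : Sym2 V) : edgeAverage G M e ∈ ({0, 1/2, 1} : Set ℝ) := by
  induction e using Sym2.ind with
  | _ u v =>
    rw [edgeAverage_mk]
    split_ifs
    · rcases hM u v with h₁ | h₁ <;> rcases hM v u with h₂ | h₂ <;> norm_num [h₁, h₂]
    · exact Or.inl rfl

lemma permMatrix_eq_zero_or_one [DecidableEq V] (σ : Equiv.Perm V) (u v : V) :
    σ.permMatrix ℝ u v = 0 ∨ σ.permMatrix ℝ u v = 1 := by
  rw [Equiv.Perm.permMatrix, PEquiv.toMatrix_apply]
  split_ifs <;> simp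

variable (G) in
def adjWeights (f : Sym2 V → ℝ) : Matrix V V ℝ :=
  Matrix.of fun u v => if G.Adj u v then f s(u, v) else 0

lemma adjWeights_comm (f : Sym2 V → ℝ) (u v : V) : adjWeights G f v u = adjWeights G f u v := by
  simp only [adjWeights, Matrix.of_apply, G.adj_comm, Sym2.eq_swap]

variable [Fintype V] [DecidableEq V]

lemma sum_incident_eq_sum_adj (f : Sym2 V → ℝ) (u : V) :
    ∑ e ∈ G.edgeFinset, (if u ∈ e then f e else 0) = ∑ v, if G.Adj u v then f s(u, v) else 0 := by
  rw [← Finset.sum_filter, ← Finset.sum_filter]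
  refine Finset.sum_bij' (fun e he => Sym2.Mem.other' (Finset.mem_filter.1 he).2)
    (fun v _ => s(u, v)) ?_ ?_ ?_ ?_ ?_
  · intro e he
    obtain ⟨he, hu⟩ := Finset.mem_filter.1 he
    refine Finset.mem_filter.2 ⟨Finset.mem_univ _, ?_⟩
    rwa [← SimpleGraph.mem_edgeSet, Sym2.other_spec' hu, ← SimpleGraph.mem_edgeFinset]
  · intro v hv
    exact Finset.mem_filter.2
      ⟨G.mem_edgeFinset.2 (Finset.mem_filter.1 hv).2, Sym2.mem_mk_left u v⟩
  · intro e he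
    exact Sym2.other_spec' (Finset.mem_filter.1 he).2
  · intro v _
    exact Sym2.congr_right.1 (Sym2.other_spec' (Sym2.mem_mk_left u v))
  · intro e he
    rw [Sym2.other_spec' (Finset.mem_filter.1 he).2]

lemma isFracMatching_edgeAverage {M : Matrix V V ℝ} (hM : M ∈ doublyStochastic ℝ V) :
    IsFracMatching G (edgeAverage G M) := by
  have hnonneg : ∀ u v, 0 ≤ M u v := fun _ _ => nonneg_of_mem_doublyStochastic hM
  have hle : ∀ u v, M u v ≤ 1 := fun _ _ => le_one_of_mem_doublyStochastic hM
  refine ⟨fun e => ?_, fun e he => ?_, fun u => ?_⟩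
  · induction e using Sym2.ind with
    | _ u v =>
      rw [edgeAverage_mk]
      split_ifs
      · constructor <;> linarith [hnonneg u v, hnonneg v u, hle u v, hle v u]
      · exact ⟨le_rfl, zero_le_one⟩
  · induction e using Sym2.ind with
    | _ u v => rw [edgeAverage_mk, if_neg (mt G.mem_edgeSet.2 he)]
  · calc ∑ e ∈ G.edgeFinset, (if u ∈ e then edgeAverage G M e else 0)
        = ∑ v, if G.Adj u v then edgeAverage G M s(u, v) else 0 := sum_incident_eq_sum_adj _ u
      _ ≤ ∑ v, (M u v + M v u) / 2 := Finset.sum_le_sum fun v _ => by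
          split_ifs with h
          · rw [edgeAverage_mk, if_pos h]
          · linarith [hnonneg u v, hnonneg v u]
      _ = 1 := by
          rw [← Finset.sum_div, Finset.sum_add_distrib, sum_row_of_mem_doublyStochastic hM,
            sum_col_of_mem_doublyStochastic hM]
          norm_num

variable (G) in
noncomputable def edgeAverageWeight : Matrix V V ℝ →ₗ[ℝ] ℝ where
  toFun M := weight G (edgeAverage G M)
  map_add' M N := by
    rw [weight, weight, weight, ← Finset.sum_add_distrib]
    refine Finset.sum_congr rfl fun e _ => ?_
    induction e using Sym2.ind with
    | _ u v =>
      simp only [edgeAverage_mk, Matrix.add_apply]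
      split_ifs <;> ring
  map_smul' c M := by
    rw [weight, weight, RingHom.id_apply, smul_eq_mul, Finset.mul_sum]
    refine Finset.sum_congr rfl fun e _ => ?_
    induction e using Sym2.ind with
    | _ u v =>
      simp only [edgeAverage_mk, Matrix.smul_apply, smul_eq_mul]
      split_ifs <;> ring

variable (G) in
noncomputable def fracMatchingMatrix (f : Sym2 V → ℝ) : Matrix V V ℝ :=
  adjWeights G f + Matrix.diagonal fun u => 1 - ∑ v, adjWeights G f u v

lemma fracMatchingMatrix_comm (f : Sym2 V → ℝ) (u v : V) :
    fracMatchingMatrix G f v u = fracMatchingMatrix G f u v := by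
  simp only [fracMatchingMatrix, Matrix.add_apply, adjWeights_comm f u v, Matrix.diagonal_apply,
    eq_comm (a := v)]
  split_ifs with h
  · subst h; rfl
  · rfl

lemma sum_fracMatchingMatrix_row (f : Sym2 V → ℝ) (u : V) :
    ∑ v, fracMatchingMatrix G f u v = 1 := by
  simp only [fracMatchingMatrix, Matrix.add_apply, Finset.sum_add_distrib, Matrix.diagonal_apply,
    Finset.sum_ite_eq, Finset.mem_univ, if_true]
  ring

lemma fracMatchingMatrix_mem_doublyStochastic {f : Sym2 V → ℝ} (hf : IsFracMatching G f) :
    fracMatchingMatrix G f ∈ doublyStochastic ℝ V := by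
  have hload : ∀ u, ∑ v, adjWeights G f u v ≤ 1 := fun u => by
    simpa only [adjWeights, Matrix.of_apply, sum_incident_eq_sum_adj] using hf.2.2 u
  refine mem_doublyStochastic_iff_sum.2 ⟨fun u v => ?_, sum_fracMatchingMatrix_row f, fun v => ?_⟩
  · have hA : 0 ≤ adjWeights G f u v := by
      simp only [adjWeights, Matrix.of_apply]
      split_ifs
      exacts [(hf.1 _).1, le_rfl]
    simp only [fracMatchingMatrix, Matrix.add_apply, Matrix.diagonal_apply]
    split_ifs <;> linarith [hload u]
  · simp only [← fracMatchingMatrix_comm f _ v, sum_fracMatchingMatrix_row]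

lemma edgeAverage_fracMatchingMatrix {f : Sym2 V → ℝ} (hf : IsFracMatching G f) :
    edgeAverage G (fracMatchingMatrix G f) = f := by
  funext e
  induction e using Sym2.ind with
  | _ u v =>
    rw [edgeAverage_mk, fracMatchingMatrix_comm f u v]
    by_cases h : G.Adj u v
    · simp [fracMatchingMatrix, adjWeights, h, Matrix.diagonal_apply_ne _ h.ne]
    · rw [if_neg h, hf.2.1 _ (mt G.mem_edgeSet.1 h)]

lemma exists_perm_weight_le {f : Sym2 V → ℝ} (hf : IsFracMatching G f) :
    ∃ σ : Equiv.Perm V, weight G f ≤ weight G (edgeAverage G (σ.permMatrix ℝ)) := by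
  have hM := fracMatchingMatrix_mem_doublyStochastic hf
  rw [← SetLike.mem_coe, doublyStochastic_eq_convexHull_permMatrix] at hM
  obtain ⟨_, ⟨σ, rfl⟩, hσ⟩ :=
    ((edgeAverageWeight G).convexOn convex_univ).exists_ge_of_mem_convexHull (Set.subset_univ _) hM
  refine ⟨σ, ?_⟩
  simpa only [edgeAverageWeight, LinearMap.coe_mk, AddHom.coe_mk,
    edgeAverage_fracMatchingMatrix hf] using hσ

lemma nuF_eq_weight {f : Sym2 V → ℝ} (hf : IsFracMatching G f)
    (hmax : ∀ g, IsFracMatching G g → weight G g ≤ weight G f) : nuF G = weight G f :=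
  IsGreatest.csSup_eq ⟨Set.mem_image_of_mem _ hf, by rintro _ ⟨g, hg, rfl⟩; exact hmax g hg⟩

lemma exists_int_two_mul_weight {f : Sym2 V → ℝ} (hf : ∀ e, f e ∈ ({0, 1/2, 1} : Set ℝ)) :
    ∃ n : ℤ, 2 * weight G f = n := by
  have : ∀ e, ∃ m : ℤ, 2 * f e = m := fun e => by
    rcases hf e with h | h | h <;> rw [h]
    exacts [⟨0, by norm_num⟩, ⟨1, by norm_num⟩, ⟨2, by norm_num⟩]
  choose m hm using this
  exact ⟨∑ e ∈ G.edgeFinset, m e, by simp only [weight, Finset.mul_sum, hm, Int.cast_sum]⟩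

end SCF

/-- `2 μ_f(G)` is an integer, and there is a maximum fractional matching
taking values in `{0, 1/2, 1}`. -/
theorem stmt0 {V : Type*} [Fintype V] [DecidableEq V] (G : SimpleGraph V)
    [DecidableRel G.Adj] :
    (∃ n : ℤ, 2 * nuF G = (n : ℝ)) ∧
      ∃ f : Sym2 V → ℝ, IsMaxFracMatching G f ∧
        ∀ e : Sym2 V, f e ∈ ({0, 1/2, 1} : Set ℝ) := by
  obtain ⟨σ, -, hσ⟩ := Finset.univ.exists_max_image
    (fun σ : Equiv.Perm V => weight G (edgeAverage G (σ.permMatrix ℝ))) Finset.univ_nonempty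
  have hf : IsFracMatching G (edgeAverage G (σ.permMatrix ℝ)) :=
    isFracMatching_edgeAverage permMatrix_mem_doublyStochastic
  have hnu : nuF G = weight G (edgeAverage G (σ.permMatrix ℝ)) :=
    nuF_eq_weight hf fun g hg =>
      let ⟨τ, hτ⟩ := exists_perm_weight_le hg
      hτ.trans (hσ τ (Finset.mem_univ τ))
  have hhalf := edgeAverage_mem_of_zero_or_one (G := G) (permMatrix_eq_zero_or_one σ)
  exact ⟨hnu ▸ exists_int_two_mul_weight hhalf, _, ⟨hf, hnu.symm⟩, hhalf⟩
end

section
/- A finite simple graph G has a spanning subgraph each of whose components is isomorphic to K_{1,1} or to a cycle C_m (m ≥ 3) if and only if for every subset S of V(G), the number of isolated vertices of G − S is at most |S|. -/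
open Finset

open SCF

section AuxSCF

variable {V : Type*} [Fintype V]

lemma deg_eq_degree (F : SimpleGraph V) [DecidableRel F.Adj] (v : V) :
    deg F v = F.degree v := by
  rw [deg, Set.ncard_eq_toFinset_card']
  rfl

/-- Forward direction: a factor gives the isolated-vertex condition. -/
lemma forward_dir (G F : SimpleGraph V) (hF : IsK11CycleFactor G F) (S : Set V) :
    iso G S ≤ S.ncard := by
  classical
  obtain ⟨hle, hcomp⟩ := hF
  -- basic degree facts
  have hd12 : ∀ v, F.degree v = 1 ∨ F.degree v = 2 := by
    intro v
    rcases hcomp v with h | h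
    · left; rw [← deg_eq_degree]; exact h.1
    · right; rw [← deg_eq_degree]; exact h v (SimpleGraph.Reachable.refl v)
  have hK : ∀ v, F.degree v = 1 → ∀ w, F.Adj v w → F.degree w = 1 := by
    intro v hv w hw
    rcases hcomp v with h | h
    · rw [← deg_eq_degree]; exact h.2 w hw
    · exfalso
      have := h v (SimpleGraph.Reachable.refl v)
      rw [deg_eq_degree] at this; omega
  set I : Finset V := Finset.univ.filter (fun v => v ∉ S ∧ ∀ w, G.Adj v w → w ∈ S) with hI
  have hiso : iso G S = I.card := by
    rw [iso]
    have : {v | v ∉ S ∧ ∀ w, G.Adj v w → w ∈ S} = (I : Set V) := by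
      ext v; simp [hI]
    rw [this, Set.ncard_coe_finset]
  have hSn : S.ncard = S.toFinite.toFinset.card := Set.ncard_eq_toFinset_card _ _
  rw [hiso, hSn]
  -- membership facts about I
  have hImem : ∀ v ∈ I, v ∉ S ∧ ∀ w, G.Adj v w → w ∈ S := by
    intro v hv; simpa [hI] using hv
  have key : 2 * I.card ≤ 2 * S.toFinite.toFinset.card := by
    calc 2 * I.card = ∑ _v ∈ I, 2 := by rw [Finset.sum_const, smul_eq_mul, mul_comm]
      _ = ∑ v ∈ I, ∑ w ∈ Finset.univ, (if F.Adj v w then 3 - F.degree v else 0) := by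
          apply Finset.sum_congr rfl
          intro v _
          rw [← Finset.sum_filter, ← SimpleGraph.neighborFinset_eq_filter,
            Finset.sum_const, smul_eq_mul, SimpleGraph.card_neighborFinset_eq_degree]
          rcases hd12 v with h | h <;> rw [h]
      _ = ∑ w ∈ Finset.univ, ∑ v ∈ I, (if F.Adj v w then 3 - F.degree v else 0) :=
          Finset.sum_comm
      _ ≤ ∑ w ∈ Finset.univ, (if w ∈ S then 2 else 0) := by
          apply Finset.sum_le_sum
          intro w _
          by_cases hwS : w ∈ S
          · rw [if_pos hwS]
            by_cases hex : ∃ v ∈ I, F.Adj v w ∧ F.degree v = 1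
            · -- the K11 case: w has a unique neighbor
              obtain ⟨v₀, hv₀I, hv₀adj, hv₀deg⟩ := hex
              have hw1 : F.degree w = 1 := hK v₀ hv₀deg w hv₀adj
              have hNw : F.neighborFinset w = {v₀} := by
                apply Finset.eq_singleton_iff_unique_mem.mpr
                constructor
                · exact (SimpleGraph.mem_neighborFinset F w v₀).mpr hv₀adj.symm
                · intro x hx
                  have : (F.neighborFinset w).card = 1 := hw1
                  rw [Finset.card_eq_one] at this
                  obtain ⟨a, ha⟩ := this
                  rw [ha] at hx
                  have hv0 : v₀ ∈ ({a} : Finset V) := by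
                    rw [← ha]; exact (SimpleGraph.mem_neighborFinset F w v₀).mpr hv₀adj.symm
                  simp only [Finset.mem_singleton] at hx hv0
                  rw [hx, hv0]
              calc ∑ v ∈ I, (if F.Adj v w then 3 - F.degree v else 0)
                  ≤ ∑ v ∈ I, (if v = v₀ then 2 else 0) := by
                    apply Finset.sum_le_sum
                    intro v _
                    by_cases hv : v = v₀
                    · subst hv
                      rw [if_pos rfl, hv₀deg]
                      split <;> omega
                    · rw [if_neg hv]
                      have : ¬ F.Adj v w := by
                        intro hadj
                        have : v ∈ F.neighborFinset w :=
                          (SimpleGraph.mem_neighborFinset F w v).mpr hadj.symm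
                        rw [hNw, Finset.mem_singleton] at this
                        exact hv this
                      rw [if_neg this]
                _ ≤ 2 := by
                    rw [Finset.sum_ite_eq' I v₀ (fun _ => 2)]
                    split <;> omega
            · -- all relevant degrees are 2
              push_neg at hex
              calc ∑ v ∈ I, (if F.Adj v w then 3 - F.degree v else 0)
                  ≤ ∑ v ∈ I, (if F.Adj v w then 1 else 0) := by
                    apply Finset.sum_le_sum
                    intro v hv
                    by_cases hadj : F.Adj v w
                    · rw [if_pos hadj, if_pos hadj]
                      have h1 := hex v hv hadj
                      rcases hd12 v with h | h <;> omega
                    · rw [if_neg hadj, if_neg hadj]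
                _ = (I.filter (fun v => F.Adj v w)).card := by
                    rw [← Finset.sum_filter, Finset.sum_const, smul_eq_mul, mul_one]
                _ ≤ (F.neighborFinset w).card := by
                    apply Finset.card_le_card
                    intro v hv
                    simp only [Finset.mem_filter] at hv
                    exact (SimpleGraph.mem_neighborFinset F w v).mpr hv.2.symm
                _ ≤ 2 := by
                    rw [SimpleGraph.card_neighborFinset_eq_degree]
                    rcases hd12 w with h | h <;> omega
          · rw [if_neg hwS]
            apply le_of_eq
            apply Finset.sum_eq_zero
            intro v hv
            have : ¬ F.Adj v w := by
              intro hadj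
              exact hwS ((hImem v hv).2 w (hle hadj))
            rw [if_neg this]
      _ = 2 * S.toFinite.toFinset.card := by
          rw [← Finset.sum_filter, Finset.sum_const, smul_eq_mul, mul_comm]
          congr 1
          apply Finset.card_nbij id (fun a ha => by simpa using ha)
            (fun a _ b _ h => h)
            (by intro a ha; refine ⟨a, ?_, rfl⟩; simpa using ha)
  omega

/-- Hall's condition from the isolated-vertex condition. -/
lemma hall_cond [DecidableEq V] (G : SimpleGraph V) [DecidableRel G.Adj]
    (h : ∀ S : Set V, iso G S ≤ S.ncard) (s : Finset V) :
    s.card ≤ (s.biUnion (fun v => G.neighborFinset v)).card := by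
  classical
  set N : Finset V := s.biUnion (fun v => G.neighborFinset v) with hN
  set T : Finset V := N \ s with hT
  have hsub : ((s \ N : Finset V) : Set V) ⊆
      {v | v ∉ (T : Set V) ∧ ∀ w, G.Adj v w → w ∈ (T : Set V)} := by
    intro v hv
    simp only [Finset.coe_sdiff, Set.mem_diff, Finset.mem_coe] at hv
    obtain ⟨hvs, hvN⟩ := hv
    constructor
    · intro hvT
      rw [hT] at hvT
      simp only [Finset.coe_sdiff, Set.mem_diff, Finset.mem_coe] at hvT
      exact hvN hvT.1
    · intro w hw
      have hwN : w ∈ N := by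
        rw [hN]
        exact Finset.mem_biUnion.mpr ⟨v, hvs, (SimpleGraph.mem_neighborFinset G v w).mpr hw⟩
      have hws : w ∉ s := by
        intro hws
        apply hvN
        rw [hN]
        exact Finset.mem_biUnion.mpr ⟨w, hws, (SimpleGraph.mem_neighborFinset G w v).mpr hw.symm⟩
      rw [hT]
      simp only [Finset.coe_sdiff, Set.mem_diff, Finset.mem_coe]
      exact ⟨hwN, hws⟩
  have h1 : (s \ N).card ≤ T.card := by
    calc (s \ N).card = ((s \ N : Finset V) : Set V).ncard := (Set.ncard_coe_finset _).symm
      _ ≤ iso G (T : Set V) := by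
          rw [iso]; exact Set.ncard_le_ncard hsub (Set.toFinite _)
      _ ≤ ((T : Finset V) : Set V).ncard := h _
      _ = T.card := Set.ncard_coe_finset _
  have h2 : (s \ N).card + (s ∩ N).card = s.card := Finset.card_sdiff_add_card_inter s N
  have h3 : (N \ s).card + (N ∩ s).card = N.card := Finset.card_sdiff_add_card_inter N s
  have h4 : (s ∩ N).card = (N ∩ s).card := by rw [Finset.inter_comm]
  have h5 : T.card = (N \ s).card := by rw [hT]
  omega

/-- Backward direction: the isolated-vertex condition gives a factor. -/
lemma backward_dir (G : SimpleGraph V) (h : ∀ S : Set V, iso G S ≤ S.ncard) :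
    ∃ F, IsK11CycleFactor G F := by
  classical
  obtain ⟨f, hfinj, hf⟩ :=
    (Finset.all_card_le_biUnion_card_iff_exists_injective (fun v => G.neighborFinset v)).mp (hall_cond G h)
  have hfadj : ∀ v, G.Adj v (f v) := fun v => (SimpleGraph.mem_neighborFinset G v (f v)).mp (hf v)
  have hbij : Function.Bijective f := (Finite.injective_iff_bijective).mp hfinj
  set σ : V ≃ V := Equiv.ofBijective f hbij with hσdef
  have hσ : ∀ v, σ v = f v := fun v => rfl
  have hne : ∀ v, σ v ≠ v := by
    intro v hv
    have hx := hfadj v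
    rw [← hσ v, hv] at hx
    exact G.loopless.irrefl v hx
  set F : SimpleGraph V := SimpleGraph.fromRel (fun u v => v = σ u) with hFdef
  have hAdj : ∀ u w, F.Adj u w ↔ (w = σ u ∨ u = σ w) := by
    intro u w
    rw [hFdef, SimpleGraph.fromRel_adj]
    constructor
    · rintro ⟨-, h⟩; exact h
    · intro h
      refine ⟨?_, h⟩
      rintro rfl
      rcases h with h | h <;> exact hne u h.symm
  have hFle : F ≤ G := by
    intro u w huw
    rcases (hAdj u w).mp huw with h | h
    · rw [h, hσ]; exact hfadj u
    · rw [h, hσ]; exact (hfadj w).symm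
  have hNS : ∀ u, F.neighborSet u = {σ u, σ.symm u} := by
    intro u
    ext w
    simp only [SimpleGraph.mem_neighborSet, Set.mem_insert_iff, Set.mem_singleton_iff, hAdj]
    constructor
    · rintro (h | h)
      · exact Or.inl h
      · right; rw [h, Equiv.symm_apply_apply]
    · rintro (h | h)
      · exact Or.inl h
      · right; rw [h, Equiv.apply_symm_apply]
  have hdeg1 : ∀ u, σ (σ u) = u → deg F u = 1 := by
    intro u hu
    have hsymm : σ.symm u = σ u := by
      conv_lhs => rw [← hu, Equiv.symm_apply_apply]
    rw [deg, hNS u, hsymm, Set.pair_eq_singleton, Set.ncard_singleton]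
  have hdeg2 : ∀ u, σ (σ u) ≠ u → deg F u = 2 := by
    intro u hu
    have hpair : σ u ≠ σ.symm u := by
      intro heq
      apply hu
      conv_rhs => rw [← Equiv.apply_symm_apply σ u, ← heq]
    rw [deg, hNS u, Set.ncard_pair hpair]
  refine ⟨F, hFle, ?_⟩
  intro v
  by_cases hv : σ (σ v) = v
  · left
    refine ⟨hdeg1 v hv, ?_⟩
    intro w hw
    have hwv : w = σ v := by
      rcases (hAdj v w).mp hw with h | h
      · exact h
      · exact σ.injective (h.symm.trans hv.symm)
    apply hdeg1
    rw [hwv]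
    rw [congrArg σ hv]
  · right
    intro w hreach
    have step : ∀ a b : V, F.Adj a b → σ (σ a) ≠ a → σ (σ b) ≠ b := by
      intro a b hab ha hb
      rcases (hAdj a b).mp hab with hb' | hb'
      · apply ha
        rw [hb'] at hb
        exact σ.injective hb
      · apply ha
        rw [hb']
        exact congrArg σ hb
    have walkP : ∀ {a b : V}, F.Walk a b → σ (σ a) ≠ a → σ (σ b) ≠ b := by
      intro a b p
      induction p with
      | nil => exact id
      | cons hadj _ ih => exact fun ha => ih (step _ _ hadj ha)
    obtain ⟨p⟩ := hreach
    exact hdeg2 w (walkP p hv)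

end AuxSCF

/-- `G` has a `{K_{1,1}, C_m : m ≥ 3}`-factor iff `iso(G-S) ≤ |S|` for all `S`. -/
theorem stmt1 {V : Type*} [Fintype V] (G : SimpleGraph V) :
    (∃ F, IsK11CycleFactor G F) ↔ ∀ S : Set V, iso G S ≤ S.ncard := by
  constructor
  · rintro ⟨F, hF⟩ S
    exact forward_dir G F hF S
  · exact backward_dir G
end

section
/- A finite simple graph G has a fractional perfect matching if and only if for every subset S of V(G), the number of isolated vertices of G − S is at most |S|. -/
open Finset

open SCF

/-!
A fractional perfect matching saturates every vertex, because the degrees sum to twice the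
weight. The isolated vertices of `G - S` then send all of their weight into `S`, so
`iso(G - S) ≤ |S|`. Conversely, taking `S = N(A) \ A` turns the condition into Hall's condition
`|A| ≤ |N(A)|`, so there is a permutation `σ` with `v ~ σ v` for all `v`; weight `1/2` on each
edge `{v, σ v}` (weight `1` on the 2-cycles of `σ`) is a fractional perfect matching.
-/

namespace SCF

variable {V : Type*} [DecidableEq V] {G : SimpleGraph V}

lemma card_filter_mem_le_of_isolated {I S : Finset V}
    (hI : ∀ v ∈ I, v ∉ S ∧ ∀ w, G.Adj v w → w ∈ S) {e : Sym2 V} (he : e ∈ G.edgeSet) :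
    #{v ∈ I | v ∈ e} ≤ #{v ∈ S | v ∈ e} := by
  refine Finset.card_le_card_of_injOn (fun v => if h : v ∈ e then Sym2.Mem.other h else v) ?_ ?_
  · intro v hv
    obtain ⟨hvI, hve⟩ := Finset.mem_filter.1 hv
    have hadj : G.Adj v (Sym2.Mem.other hve) := by rwa [← Sym2.other_spec hve] at he
    simp only [dif_pos hve, Finset.coe_filter, Set.mem_ofPred_eq]
    exact ⟨(hI v hvI).2 _ hadj, Sym2.other_mem hve⟩
  · intro v hv v' hv' h
    obtain ⟨-, hve⟩ := Finset.mem_filter.1 hv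
    obtain ⟨-, hve'⟩ := Finset.mem_filter.1 hv'
    simp only [dif_pos hve, dif_pos hve'] at h
    have hspec := (Sym2.other_spec hve).trans (Sym2.other_spec hve').symm
    rw [h] at hspec
    exact Sym2.congr_left.1 hspec

noncomputable def fracMatchingOfPerm (σ : Equiv.Perm V) : Sym2 V → ℝ :=
  Sym2.lift ⟨fun a b => ((if σ a = b then 1 else 0) + (if σ b = a then 1 else 0)) / 2,
    fun a b => by dsimp only; rw [add_comm]⟩

lemma fracMatchingOfPerm_mk (σ : Equiv.Perm V) (a b : V) :
    fracMatchingOfPerm σ s(a, b) =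
      ((if σ a = b then 1 else 0) + (if σ b = a then 1 else 0)) / 2 := rfl

variable [Fintype V] [DecidableRel G.Adj]

variable (G) in
def fracDeg (f : Sym2 V → ℝ) (v : V) : ℝ :=
  ∑ e ∈ G.edgeFinset, if v ∈ e then f e else 0

lemma fracDeg_eq_sum_neighborFinset (f : Sym2 V → ℝ) (v : V) :
    fracDeg G f v = ∑ w ∈ G.neighborFinset v, f s(v, w) := by
  rw [fracDeg, ← Finset.sum_filter, ← G.incidenceFinset_eq_filter]
  symm
  refine Finset.sum_nbij (fun w => s(v, w)) ?_ ?_ ?_ (fun _ _ => rfl)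
  · intro w hw
    simpa [SimpleGraph.mem_incidenceFinset, SimpleGraph.incidenceSet] using hw
  · intro w _ w' _ h
    exact Sym2.congr_right.1 h
  · intro e he
    obtain ⟨he, hv⟩ := (G.mem_incidenceFinset v e).1 he
    obtain ⟨w, rfl⟩ := Sym2.mem_iff_exists.1 hv
    exact ⟨w, (G.mem_neighborFinset v w).2 he, rfl⟩

lemma sum_fracDeg_eq_sum_card_mul (f : Sym2 V → ℝ) (T : Finset V) :
    ∑ v ∈ T, fracDeg G f v = ∑ e ∈ G.edgeFinset, #{v ∈ T | v ∈ e} * f e := by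
  simp only [fracDeg]
  rw [Finset.sum_comm]
  refine Finset.sum_congr rfl fun e _ => ?_
  rw [← Finset.sum_filter, Finset.sum_const, nsmul_eq_mul]

lemma sum_fracDeg_eq_two_mul_weight (f : Sym2 V → ℝ) :
    ∑ v, fracDeg G f v = 2 * weight G f := by
  rw [sum_fracDeg_eq_sum_card_mul, weight, Finset.mul_sum]
  refine Finset.sum_congr rfl fun e he => ?_
  have hfilter : ({v | v ∈ e} : Finset V) = e.toFinset := by ext; simp
  rw [hfilter, Sym2.card_toFinset_of_not_isDiag e (G.not_isDiag_of_mem_edgeSet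
    (G.mem_edgeFinset.1 he))]
  norm_num

lemma IsFracMatching.fracDeg_eq_one {f : Sym2 V → ℝ} (hf : IsFracMatching G f)
    (hw : weight G f = (Fintype.card V : ℝ) / 2) (v : V) : fracDeg G f v = 1 := by
  have hsum : ∑ v, fracDeg G f v = ∑ _v : V, (1 : ℝ) := by
    rw [sum_fracDeg_eq_two_mul_weight, hw]
    simp only [Finset.sum_const, Finset.card_univ, nsmul_eq_mul, mul_one]
    ring
  exact (Finset.sum_eq_sum_iff_of_le fun v _ => hf.2.2 v).1 hsum v (Finset.mem_univ v)

lemma sum_fracDeg_le_of_isolated {f : Sym2 V → ℝ} (hf : ∀ e, 0 ≤ f e) {I S : Finset V}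
    (hI : ∀ v ∈ I, v ∉ S ∧ ∀ w, G.Adj v w → w ∈ S) :
    ∑ v ∈ I, fracDeg G f v ≤ ∑ v ∈ S, fracDeg G f v := by
  simp only [sum_fracDeg_eq_sum_card_mul]
  refine Finset.sum_le_sum fun e he => mul_le_mul_of_nonneg_right ?_ (hf e)
  exact_mod_cast card_filter_mem_le_of_isolated hI (G.mem_edgeFinset.1 he)

lemma IsFracMatching.iso_le_ncard {f : Sym2 V → ℝ} (hf : IsFracMatching G f)
    (hw : weight G f = (Fintype.card V : ℝ) / 2) (S : Set V) : iso G S ≤ S.ncard := by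
  classical
  have hsum := sum_fracDeg_le_of_isolated (G := G) (fun e => (hf.1 e).1)
    (I := {v | v ∉ S ∧ ∀ w, G.Adj v w → w ∈ S}.toFinset) (S := S.toFinset)
    (by simp)
  simp only [hf.fracDeg_eq_one hw, Finset.sum_const, nsmul_one] at hsum
  rw [iso, Set.ncard_eq_toFinset_card', Set.ncard_eq_toFinset_card']
  exact_mod_cast hsum

lemma fracDeg_fracMatchingOfPerm {σ : Equiv.Perm V} (hσ : ∀ v, G.Adj v (σ v)) (v : V) :
    fracDeg G (fracMatchingOfPerm σ) v = 1 := by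
  have hout : ∑ w ∈ G.neighborFinset v, (if σ v = w then 1 else 0 : ℝ) = 1 := by
    simp [hσ v]
  have hin : ∑ w ∈ G.neighborFinset v, (if σ w = v then 1 else 0 : ℝ) = 1 := by
    simp_rw [← Equiv.eq_symm_apply]
    simpa using (hσ (σ.symm v)).symm
  rw [fracDeg_eq_sum_neighborFinset]
  simp only [fracMatchingOfPerm_mk, ← Finset.sum_div, Finset.sum_add_distrib, hout, hin]
  norm_num

lemma isFracMatching_fracMatchingOfPerm {σ : Equiv.Perm V} (hσ : ∀ v, G.Adj v (σ v)) :
    IsFracMatching G (fracMatchingOfPerm σ) := by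
  refine ⟨fun e => ?_, fun e he => ?_, fun v => (fracDeg_fracMatchingOfPerm hσ v).le⟩
  · induction e using Sym2.ind with
    | _ a b => rw [fracMatchingOfPerm_mk]; constructor <;> split_ifs <;> norm_num
  · induction e using Sym2.ind with
    | _ a b =>
      have hab : σ a ≠ b := fun h => he (h ▸ hσ a)
      have hba : σ b ≠ a := fun h => he (h ▸ (hσ b).symm)
      simp [fracMatchingOfPerm_mk, hab, hba]

lemma weight_fracMatchingOfPerm {σ : Equiv.Perm V} (hσ : ∀ v, G.Adj v (σ v)) :
    weight G (fracMatchingOfPerm σ) = (Fintype.card V : ℝ) / 2 := by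
  have hsum := sum_fracDeg_eq_two_mul_weight (G := G) (fracMatchingOfPerm σ)
  simp only [fracDeg_fracMatchingOfPerm hσ, Finset.sum_const, Finset.card_univ, nsmul_eq_mul,
    mul_one] at hsum
  linarith

lemma card_le_card_biUnion_neighborFinset (h : ∀ S : Set V, iso G S ≤ S.ncard) (A : Finset V) :
    #A ≤ #(A.biUnion fun v => G.neighborFinset v) := by
  set N := A.biUnion fun v => G.neighborFinset v
  -- the vertices of `A \ N(A)` are isolated in `G - (N(A) \ A)`
  have hiso : (↑(A \ N) : Set V) ⊆
      {v | v ∉ (↑(N \ A) : Set V) ∧ ∀ w, G.Adj v w → w ∈ (↑(N \ A) : Set V)} := by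
    intro v hv
    simp only [Finset.coe_sdiff, Set.mem_sdiff, Finset.mem_coe, Set.mem_ofPred_eq] at hv ⊢
    refine ⟨fun hvN => hvN.2 hv.1, fun w hvw => ⟨?_, fun hwA => hv.2 ?_⟩⟩
    · exact Finset.mem_biUnion.2 ⟨v, hv.1, (G.mem_neighborFinset v w).2 hvw⟩
    · exact Finset.mem_biUnion.2 ⟨w, hwA, (G.mem_neighborFinset w v).2 hvw.symm⟩
  have hcard := (Set.ncard_le_ncard hiso).trans (h ↑(N \ A))
  rw [Set.ncard_coe_finset, Set.ncard_coe_finset] at hcard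
  exact Finset.card_sdiff_le_card_sdiff_iff.1 hcard

lemma exists_perm_adj (h : ∀ S : Set V, iso G S ≤ S.ncard) :
    ∃ σ : Equiv.Perm V, ∀ v, G.Adj v (σ v) := by
  obtain ⟨σ, hinj, hσ⟩ := (Finset.all_card_le_biUnion_card_iff_exists_injective
    fun v => G.neighborFinset v).1 (card_le_card_biUnion_neighborFinset h)
  exact ⟨Equiv.ofBijective σ (Finite.injective_iff_bijective.1 hinj),
    fun v => (G.mem_neighborFinset v (σ v)).1 (hσ v)⟩

end SCF

/-- `G` has a fractional perfect matching iff `iso(G-S) ≤ |S|` for all `S`. -/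
theorem stmt2 {V : Type*} [Fintype V] [DecidableEq V] (G : SimpleGraph V)
    [DecidableRel G.Adj] :
    (∃ f : Sym2 V → ℝ, IsFracMatching G f ∧ weight G f = (Fintype.card V : ℝ) / 2) ↔
      ∀ S : Set V, iso G S ≤ S.ncard := by
  constructor
  · rintro ⟨f, hf, hw⟩
    exact hf.iso_le_ncard hw
  · intro h
    obtain ⟨σ, hσ⟩ := exists_perm_adj h
    exact ⟨fracMatchingOfPerm σ, isFracMatching_fracMatchingOfPerm hσ,
      weight_fracMatchingOfPerm hσ⟩
end

section
/- A finite simple graph G has a spanning subgraph each of whose components is isomorphic to K_{1,1}, K_{1,2}, or a cycle C_m (m ≥ 3) if and only if iso(G−S) ≤ 2|S| for every subset S of V(G). -/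
open Finset

open SCF

set_option linter.unusedSectionVars false


open Finset

namespace StmtThree

variable {V : Type*} [Fintype V] [DecidableEq V] (G : SimpleGraph V) [DecidableRel G.Adj]

/-- Isolated vertices of the graph induced on `A` after removing `S`. -/
def isoF (A S : Finset V) : Finset V :=
  A.filter (fun v => v ∉ S ∧ ∀ w ∈ A, G.Adj v w → w ∈ S)

/-- The iso-condition restricted to `A`. -/
def Cond (A : Finset V) : Prop := ∀ S ⊆ A, (isoF G A S).card ≤ 2 * S.card

/-- `p` describes a partition of `A` into stars `K_{1,1}`/`K_{1,2}` of `G`: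
`p v` is the center of the star of `v`. -/
def IsPack (A : Finset V) (p : V → V) : Prop :=
  (∀ v ∈ A, p v ∈ A ∧ p (p v) = p v ∧ (p v ≠ v → G.Adj (p v) v)) ∧
  (∀ v ∈ A, p v = v →
    (A.filter fun w => p w = v ∧ w ≠ v).card = 1 ∨
    (A.filter fun w => p w = v ∧ w ≠ v).card = 2)


/-- vertices of `S` adjacent to something in `J`. -/
def NS (S J : Finset V) : Finset V := S.filter (fun s => ∃ j ∈ J, G.Adj s j)

variable {G}

lemma mem_isoF {A S : Finset V} {v : V} :
    v ∈ isoF G A S ↔ v ∈ A ∧ v ∉ S ∧ ∀ w ∈ A, G.Adj v w → w ∈ S := by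
  simp [isoF, and_assoc]

lemma isoF_subset {A S : Finset V} : isoF G A S ⊆ A := filter_subset _ _

/-- gluing two packings on disjoint sets -/
lemma IsPack.glue {A B : Finset V} {p q : V → V} (hA : IsPack G A p) (hB : IsPack G B q)
    (hd : Disjoint A B) : IsPack G (A ∪ B) (fun v => if v ∈ A then p v else q v) := by
  have hAB : ∀ v ∈ A, v ∉ B := fun v hv => Finset.disjoint_left.1 hd hv
  have hBA : ∀ v ∈ B, v ∉ A := fun v hv => Finset.disjoint_right.1 hd hv
  constructor
  · intro v hv
    dsimp only
    rcases Finset.mem_union.1 hv with hv | hv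
    · have h1 := hA.1 v hv
      rw [if_pos hv, if_pos h1.1]
      exact ⟨Finset.mem_union_left _ h1.1, h1.2.1, h1.2.2⟩
    · have h1 := hB.1 v hv
      rw [if_neg (hBA v hv), if_neg (hBA _ h1.1)]
      exact ⟨Finset.mem_union_right _ h1.1, h1.2.1, h1.2.2⟩
  · intro v hv hpv
    dsimp only at hpv ⊢
    rcases Finset.mem_union.1 hv with hv | hv
    · rw [if_pos hv] at hpv
      have hfe : ((A ∪ B).filter fun w => (if w ∈ A then p w else q w) = v ∧ w ≠ v)
          = A.filter fun w => p w = v ∧ w ≠ v := by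
        ext w
        simp only [Finset.mem_filter, Finset.mem_union]
        constructor
        · rintro ⟨hw | hw, hw2, hw3⟩
          · rw [if_pos hw] at hw2; exact ⟨hw, hw2, hw3⟩
          · rw [if_neg (hBA w hw)] at hw2
            exact absurd (hw2 ▸ (hB.1 w hw).1) (hAB v hv)
        · rintro ⟨hw, hw2, hw3⟩
          exact ⟨Or.inl hw, by rw [if_pos hw]; exact hw2, hw3⟩
      rw [hfe]
      exact hA.2 v hv hpv
    · rw [if_neg (hBA v hv)] at hpv
      have hfe : ((A ∪ B).filter fun w => (if w ∈ A then p w else q w) = v ∧ w ≠ v)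
          = B.filter fun w => q w = v ∧ w ≠ v := by
        ext w
        simp only [Finset.mem_filter, Finset.mem_union]
        constructor
        · rintro ⟨hw | hw, hw2, hw3⟩
          · rw [if_pos hw] at hw2
            exact absurd (hw2 ▸ (hA.1 w hw).1) (hBA v hv)
          · rw [if_neg (hBA w hw)] at hw2; exact ⟨hw, hw2, hw3⟩
        · rintro ⟨hw, hw2, hw3⟩
          exact ⟨Or.inr hw, by rw [if_neg (hBA w hw)]; exact hw2, hw3⟩
      rw [hfe]
      exact hB.2 v hv hpv

/-- a single `K_{1,1}` star: center `v`, leaf `w`. -/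
lemma pack_pair {w v : V} (hne : w ≠ v) (hadj : G.Adj v w) :
    IsPack G {w, v} (fun y => if y = w then v else y) := by
  have hvw : ¬ v = w := Ne.symm hne
  constructor
  · intro t ht
    dsimp only
    rcases Finset.mem_insert.1 ht with rfl | ht
    · rw [if_pos rfl, if_neg hvw]
      exact ⟨by simp, rfl, fun _ => hadj⟩
    · rcases Finset.mem_singleton.1 ht with rfl
      rw [if_neg hvw]
      exact ⟨by simp, by rw [if_neg hvw], fun h => absurd rfl h⟩
  · intro t ht hpt
    dsimp only at hpt ⊢
    rcases Finset.mem_insert.1 ht with rfl | ht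
    · rw [if_pos rfl] at hpt; exact absurd hpt.symm hne
    · rcases Finset.mem_singleton.1 ht with rfl
      left
      have hfe : ({w, t} : Finset V).filter (fun x => (if x = w then t else x) = t ∧ x ≠ t)
          = {w} := by
        ext x
        simp only [Finset.mem_filter, Finset.mem_insert, Finset.mem_singleton]
        constructor
        · rintro ⟨hx | rfl, hx2, hx3⟩
          · exact hx
          · exact absurd rfl hx3
        · rintro rfl
          exact ⟨Or.inl rfl, by rw [if_pos rfl], hne⟩
      rw [hfe, Finset.card_singleton]

/-- a single `K_{1,2}` star: center `x`, leaves `u, v`. -/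
lemma pack_triple {x u v : V} (huv : u ≠ v) (hxu : x ≠ u) (hxv : x ≠ v)
    (hadj1 : G.Adj x u) (hadj2 : G.Adj x v) :
    IsPack G {u, v, x} (fun y => if y = u ∨ y = v then x else y) := by
  have hxx : ¬ (x = u ∨ x = v) := by rintro (h | h); exacts [hxu h, hxv h]
  constructor
  · intro t ht
    dsimp only
    simp only [Finset.mem_insert, Finset.mem_singleton] at ht
    rcases ht with rfl | rfl | rfl
    · rw [if_pos (Or.inl rfl), if_neg hxx]
      exact ⟨by simp, rfl, fun _ => hadj1⟩
    · rw [if_pos (Or.inr rfl), if_neg hxx]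
      exact ⟨by simp, rfl, fun _ => hadj2⟩
    · rw [if_neg hxx]
      exact ⟨by simp, by rw [if_neg hxx], fun h => absurd rfl h⟩
  · intro t ht hpt
    dsimp only at hpt ⊢
    simp only [Finset.mem_insert, Finset.mem_singleton] at ht
    rcases ht with rfl | rfl | rfl
    · rw [if_pos (Or.inl rfl)] at hpt; exact absurd hpt hxu
    · rw [if_pos (Or.inr rfl)] at hpt; exact absurd hpt hxv
    · right
      have hfe : ({u, v, t} : Finset V).filter
          (fun y => (if y = u ∨ y = v then t else y) = t ∧ y ≠ t) = {u, v} := by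
        ext y
        simp only [Finset.mem_filter, Finset.mem_insert, Finset.mem_singleton]
        constructor
        · rintro ⟨hy | hy | rfl, hy2, hy3⟩
          · exact Or.inl hy
          · exact Or.inr hy
          · exact absurd rfl hy3
        · rintro (rfl | rfl)
          · exact ⟨Or.inl rfl, by rw [if_pos (Or.inl rfl)], hxu.symm⟩
          · exact ⟨Or.inr (Or.inl rfl), by rw [if_pos (Or.inr rfl)], hxv.symm⟩
      rw [hfe, Finset.card_insert_of_notMem (by simpa using huv), Finset.card_singleton]

/-- remove a packed subset and recurse on the rest -/
lemma remove_glue {A R : Finset V} {p₀ : V → V} (hR : R ⊆ A) (hRne : R.Nonempty)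
    (hpack : IsPack G R p₀) (hcond : Cond G (A \ R))
    (ih : ∀ B ⊂ A, Cond G B → ∃ p, IsPack G B p) :
    ∃ p, IsPack G A p := by
  obtain ⟨q, hq⟩ := ih (A \ R) (Finset.sdiff_ssubset hR hRne) hcond
  have h2 := hpack.glue hq Finset.disjoint_sdiff
  rw [Finset.union_sdiff_of_subset hR] at h2
  exact ⟨_, h2⟩


lemma NS_subset {S J : Finset V} : NS G S J ⊆ S := filter_subset _ _

lemma keyJ {A S J : Finset V} (hJ : J ⊆ isoF G A S) : J ⊆ isoF G A (NS G S J) := by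
  intro j hj
  obtain ⟨hjA, hjS, hnb⟩ := mem_isoF.1 (hJ hj)
  refine mem_isoF.2 ⟨hjA, fun h => hjS (NS_subset h), fun w hw hadj => ?_⟩
  exact mem_filter.2 ⟨hnb w hw hadj, j, hj, hadj.symm⟩

lemma NS_nonempty {A S J : Finset V} (hcond : Cond G A) (hJ : J ⊆ isoF G A S)
    (hJne : J.Nonempty) : (NS G S J).Nonempty := by
  by_contra hne
  rw [Finset.not_nonempty_iff_eq_empty] at hne
  obtain ⟨j, hj⟩ := hJne
  have h2 := keyJ hJ hj
  rw [hne] at h2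
  obtain ⟨hjA, -, hnb⟩ := mem_isoF.1 h2
  have : j ∈ isoF G A ∅ := mem_isoF.2 ⟨hjA, by simp, hnb⟩
  have h3 := hcond ∅ (Finset.empty_subset _)
  simp only [Finset.card_empty, Nat.mul_zero, Nat.le_zero, Finset.card_eq_zero] at h3
  rw [h3] at this
  exact absurd this (Finset.notMem_empty _)

lemma h1_of_cond {A S J : Finset V} (hcond : Cond G A) (hSA : S ⊆ A)
    (hJ : J ⊆ isoF G A S) : J.card ≤ 2 * (NS G S J).card :=
  (Finset.card_le_card (keyJ hJ)).trans (hcond _ (NS_subset.trans hSA))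

lemma isoF_empty_of_mindeg {A S : Finset V} {n : ℕ}
    (hdeg : ∀ v ∈ A, n ≤ (A.filter (fun w => G.Adj v w)).card) (hS : S.card < n) :
    isoF G A S = ∅ := by
  rw [Finset.eq_empty_iff_forall_notMem]
  intro v hv
  obtain ⟨hvA, -, hnb⟩ := mem_isoF.1 hv
  have hsub : A.filter (fun w => G.Adj v w) ⊆ S := fun w hw => by
    obtain ⟨hwA, hadj⟩ := mem_filter.1 hw
    exact hnb w hwA hadj
  exact absurd ((hdeg v hvA).trans (Finset.card_le_card hsub)) (Nat.not_le.2 hS)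




lemma gadget {A S : Finset V} (hSA : S ⊆ A) (hS : S.Nonempty)
    (h1 : ∀ J ⊆ isoF G A S, J.card ≤ 2 * (NS G S J).card)
    (h2 : ∀ J ⊆ isoF G A S,
      J.card + (2 * S.card - (isoF G A S).card) ≤ (NS G S J).card + S.card)
    (h3 : ∀ T ⊆ A \ (S ∪ isoF G A S),
      (isoF G A (S ∪ T)).card ≤ 2 * T.card + (isoF G A S).card)
    (ih : ∀ B ⊂ A, Cond G B → ∃ p, IsPack G B p) :
    ∃ p, IsPack G A p := by
  classical
  set I : Finset V := isoF G A S with hIdef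
  set a : ℕ := 2 * S.card - I.card with hadef
  have hIS : ∀ v ∈ I, v ∉ S := fun v hv => (mem_isoF.1 hv).2.1
  have hIA : I ⊆ A := isoF_subset
  have hInb : ∀ v ∈ I, ∀ w ∈ A, G.Adj v w → w ∈ S := fun v hv => (mem_isoF.1 hv).2.2
  have hIcard : I.card ≤ 2 * S.card := by
    calc I.card ≤ 2 * (NS G S I).card := h1 I Finset.Subset.rfl
    _ ≤ 2 * S.card := by
        have := Finset.card_le_card (NS_subset (G := G) (S := S) (J := I)); omega
  have hIa : I.card + a = 2 * S.card := by omega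
  -- the bipartite Hall system
  set t : (↥I ⊕ Fin a) → Finset (V × Bool) := fun x =>
    match x with
    | Sum.inl i => (S.filter (fun s => G.Adj (i : V) s)) ×ˢ (Finset.univ : Finset Bool)
    | Sum.inr _ => S ×ˢ ({false} : Finset Bool) with htdef
  have hall : ∀ W : Finset (↥I ⊕ Fin a), W.card ≤ (W.biUnion t).card := by
    intro W
    set J : Finset V := W.toLeft.image Subtype.val with hJdef
    have hJI : J ⊆ I := by
      intro x hx
      obtain ⟨i, -, rfl⟩ := Finset.mem_image.1 hx
      exact i.2
    have hJcard : W.toLeft.card = J.card :=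
      (Finset.card_image_of_injective _ Subtype.val_injective).symm
    have hsub1 : ∀ b : Bool, ∀ s ∈ NS G S J, (s, b) ∈ W.biUnion t := by
      intro b s hs
      obtain ⟨hsS, j, hjJ, hadj⟩ := Finset.mem_filter.1 hs
      obtain ⟨i, hiW, rfl⟩ := Finset.mem_image.1 hjJ
      refine Finset.mem_biUnion.2 ⟨Sum.inl i, Finset.mem_toLeft.1 hiW, ?_⟩
      simp only [htdef]
      exact Finset.mem_product.2 ⟨Finset.mem_filter.2 ⟨hsS, hadj.symm⟩, Finset.mem_univ _⟩
    have hWcard : W.card = W.toLeft.card + W.toRight.card :=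
      (Finset.card_toLeft_add_card_toRight).symm
    rcases Finset.eq_empty_or_nonempty W.toRight with hre | hrne
    · have hsub : (NS G S J) ×ˢ (Finset.univ : Finset Bool) ⊆ W.biUnion t := by
        intro y hy
        obtain ⟨hy1, -⟩ := Finset.mem_product.1 hy
        have := hsub1 y.2 y.1 hy1
        simpa using this
      calc W.card = J.card := by rw [hWcard, hre]; simp [hJcard]
        _ ≤ 2 * (NS G S J).card := h1 J hJI
        _ = ((NS G S J) ×ˢ (Finset.univ : Finset Bool)).card := by
            rw [Finset.card_product]; simp [Nat.mul_comm]
        _ ≤ (W.biUnion t).card := Finset.card_le_card hsub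
    · obtain ⟨k, hk⟩ := hrne
      have hsub2 : S ×ˢ ({false} : Finset Bool) ⊆ W.biUnion t := by
        intro y hy
        refine Finset.mem_biUnion.2 ⟨Sum.inr k, Finset.mem_toRight.1 hk, ?_⟩
        simpa [htdef] using hy
      have hsub : (NS G S J) ×ˢ ({true} : Finset Bool) ∪ S ×ˢ ({false} : Finset Bool)
          ⊆ W.biUnion t := by
        refine Finset.union_subset ?_ hsub2
        intro y hy
        obtain ⟨hy1, hy2⟩ := Finset.mem_product.1 hy
        rw [Finset.mem_singleton] at hy2
        have := hsub1 true y.1 hy1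
        rwa [show (y.1, true) = y by rw [← hy2]] at this
      have hdisj : Disjoint ((NS G S J) ×ˢ ({true} : Finset Bool))
          (S ×ˢ ({false} : Finset Bool)) := by
        rw [Finset.disjoint_left]
        intro y hy1 hy2
        have b1 := (Finset.mem_product.1 hy1).2
        have b2 := (Finset.mem_product.1 hy2).2
        rw [Finset.mem_singleton] at b1 b2
        rw [b1] at b2; exact Bool.noConfusion b2
      have hcard : (NS G S J).card + S.card ≤ (W.biUnion t).card := by
        have := Finset.card_le_card hsub
        rw [Finset.card_union_of_disjoint hdisj] at this
        simpa using this
      have hra : W.toRight.card ≤ a := by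
        have := Finset.card_le_univ W.toRight
        simpa using this
      have h2' := h2 J hJI
      omega
  obtain ⟨f, hfinj, hft⟩ := (Finset.all_card_le_biUnion_card_iff_exists_injective t).1 hall
  have hft1 : ∀ (v : V) (hv : v ∈ I),
      (f (Sum.inl ⟨v, hv⟩)).1 ∈ S ∧ G.Adj v (f (Sum.inl ⟨v, hv⟩)).1 := by
    intro v hv
    have := hft (Sum.inl ⟨v, hv⟩)
    simp only [htdef] at this
    have h := (Finset.mem_product.1 this).1
    exact ⟨(Finset.mem_filter.1 h).1, (Finset.mem_filter.1 h).2⟩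
  have himage : Finset.univ.image f = S ×ˢ (Finset.univ : Finset Bool) := by
    apply Finset.eq_of_subset_of_card_le
    · intro y hy
      obtain ⟨x, -, rfl⟩ := Finset.mem_image.1 hy
      have := hft x
      match x with
      | Sum.inl i =>
          simp only [htdef] at this
          obtain ⟨h1', h2'⟩ := Finset.mem_product.1 this
          exact Finset.mem_product.2 ⟨(Finset.mem_filter.1 h1').1, Finset.mem_univ _⟩
      | Sum.inr k =>
          simp only [htdef] at this
          obtain ⟨h1', -⟩ := Finset.mem_product.1 this
          exact Finset.mem_product.2 ⟨h1', Finset.mem_univ _⟩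
    · rw [Finset.card_product, Finset.card_image_of_injective _ hfinj]
      simp only [Finset.card_univ, Fintype.card_sum, Fintype.card_coe, Fintype.card_fin, Fintype.card_bool]
      omega
  -- the packing map
  set p : V → V := fun v => if hv : v ∈ I then (f (Sum.inl ⟨v, hv⟩)).1 else v with hpdef
  have hpI : ∀ (v : V) (hv : v ∈ I), p v = (f (Sum.inl ⟨v, hv⟩)).1 := by
    intro v hv; simp only [hpdef]; rw [dif_pos hv]
  have hpNotI : ∀ v, v ∉ I → p v = v := by
    intro v hv; simp only [hpdef]; rw [dif_neg hv]
  have hpS : ∀ v ∈ S, p v = v := fun v hv => hpNotI v (fun h => hIS v h hv)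
  have hpImem : ∀ v ∈ I, p v ∈ S ∧ G.Adj v (p v) := by
    intro v hv
    rw [hpI v hv]
    exact hft1 v hv
  have hpack : IsPack G (S ∪ I) p := by
    constructor
    · intro v hv
      rcases Finset.mem_union.1 hv with hv' | hv'
      · rw [hpS v hv']
        exact ⟨hv, by rw [hpS v hv'], fun h => absurd rfl h⟩
      · obtain ⟨hmem, hadj⟩ := hpImem v hv'
        exact ⟨Finset.mem_union_left _ hmem, hpS _ hmem, fun _ => hadj.symm⟩
    · intro v hv hpv
      have hvS : v ∈ S := by
        rcases Finset.mem_union.1 hv with h | h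
        · exact h
        · exact absurd (hpv ▸ (hpImem v h).1) (fun hc => hIS v h hc)
      have hL : ((S ∪ I).filter fun w => p w = v ∧ w ≠ v) = I.filter (fun w => p w = v) := by
        ext w
        simp only [Finset.mem_filter, Finset.mem_union]
        constructor
        · rintro ⟨hw | hw, h2', h3'⟩
          · exact absurd ((hpS w hw).symm.trans h2') h3'
          · exact ⟨hw, h2'⟩
        · rintro ⟨hw, h2'⟩
          exact ⟨Or.inr hw, h2', fun hc => hIS w hw (hc ▸ hvS)⟩
      rw [hL]
      have hvtrue : (v, true) ∈ Finset.univ.image f := by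
        rw [himage]; exact Finset.mem_product.2 ⟨hvS, Finset.mem_univ _⟩
      obtain ⟨x, -, hx⟩ := Finset.mem_image.1 hvtrue
      have hmem1 : ∃ w, w ∈ I.filter (fun w => p w = v) := by
        match x, hx with
        | Sum.inl ⟨w, hwI⟩, hx =>
            refine ⟨w, Finset.mem_filter.2 ⟨hwI, ?_⟩⟩
            rw [hpI w hwI, hx]
        | Sum.inr k, hx =>
            exfalso
            have := hft (Sum.inr k)
            simp only [htdef] at this
            have hb := (Finset.mem_product.1 this).2
            rw [hx] at hb
            simp at hb
      set g : V → Bool := fun w => if hw : w ∈ I then (f (Sum.inl ⟨w, hw⟩)).2 else false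
        with hgdef
      have hcard2 : (I.filter (fun w => p w = v)).card ≤ 2 := by
        have hinj : ∀ w ∈ I.filter (fun w => p w = v), ∀ w' ∈ I.filter (fun w => p w = v),
            g w = g w' → w = w' := by
          intro w hw w' hw'
          obtain ⟨hwI, hwp⟩ := Finset.mem_filter.1 hw
          obtain ⟨hwI', hwp'⟩ := Finset.mem_filter.1 hw'
          intro hg
          have he1 : f (Sum.inl ⟨w, hwI⟩) = (v, g w) := by
            apply Prod.ext
            · rw [← hpI w hwI]; exact hwp
            · simp only [hgdef]; rw [dif_pos hwI]
          have he2 : f (Sum.inl ⟨w', hwI'⟩) = (v, g w') := by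
            apply Prod.ext
            · rw [← hpI w' hwI']; exact hwp'
            · simp only [hgdef]; rw [dif_pos hwI']
          have := hfinj (he1.trans (hg ▸ he2.symm))
          exact Subtype.mk_eq_mk.1 (Sum.inl.inj this)
        have := Finset.card_le_card_of_injOn g (fun w _ => Finset.mem_univ (g w)) hinj
        simpa using this
      have hcard1 : 1 ≤ (I.filter (fun w => p w = v)).card := by
        obtain ⟨w, hw⟩ := hmem1
        exact Finset.card_pos.2 ⟨w, hw⟩
      omega
  -- condition on the rest
  have hSIA : S ∪ I ⊆ A := Finset.union_subset hSA hIA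
  have hA'cond : Cond G (A \ (S ∪ I)) := by
    intro T hT
    have hsub : isoF G (A \ (S ∪ I)) T ∪ I ⊆ isoF G A (S ∪ T) := by
      intro x hx
      rcases Finset.mem_union.1 hx with hx' | hx'
      · obtain ⟨hxA', hxT, hnb⟩ := mem_isoF.1 hx'
        have hxA : x ∈ A := (Finset.mem_sdiff.1 hxA').1
        have hxSI : x ∉ S ∪ I := (Finset.mem_sdiff.1 hxA').2
        refine mem_isoF.2 ⟨hxA, ?_, ?_⟩
        · intro hc
          rcases Finset.mem_union.1 hc with hc' | hc'
          · exact hxSI (Finset.mem_union_left _ hc')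
          · exact hxT hc'
        · intro w hw hadj
          by_cases hwS : w ∈ S
          · exact Finset.mem_union_left _ hwS
          by_cases hwI : w ∈ I
          · exact absurd (hInb w hwI x hxA hadj.symm)
              (fun hc => hxSI (Finset.mem_union_left _ hc))
          · refine Finset.mem_union_right _ (hnb w ?_ hadj)
            exact Finset.mem_sdiff.2 ⟨hw, fun hc => by
              rcases Finset.mem_union.1 hc with h | h
              exacts [hwS h, hwI h]⟩
      · refine mem_isoF.2 ⟨hIA hx', ?_, ?_⟩
        · intro hc
          rcases Finset.mem_union.1 hc with hc' | hc'
          · exact hIS x hx' hc'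
          · exact (Finset.mem_sdiff.1 (hT hc')).2 (Finset.mem_union_right _ hx')
        · intro w hw hadj
          exact Finset.mem_union_left _ (hInb x hx' w hw hadj)
    have hdisj : Disjoint (isoF G (A \ (S ∪ I)) T) I := by
      rw [Finset.disjoint_left]
      intro x hx hxI
      exact (Finset.mem_sdiff.1 (isoF_subset hx)).2 (Finset.mem_union_right _ hxI)
    have hcards : (isoF G (A \ (S ∪ I)) T).card + I.card ≤ (isoF G A (S ∪ T)).card := by
      rw [← Finset.card_union_of_disjoint hdisj]
      exact Finset.card_le_card hsub
    have := h3 T hT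
    omega
  exact remove_glue hSIA (hS.mono Finset.subset_union_left) hpack hA'cond ih


theorem main : ∀ A : Finset V, Cond G A → ∃ p, IsPack G A p := by
  intro A
  induction A using Finset.strongInduction with
  | _ A ih =>
    intro hcond
    rcases Finset.eq_empty_or_nonempty A with rfl | hAne
    · exact ⟨fun v => v, fun v hv => absurd hv (Finset.notMem_empty v),
        fun v hv => absurd hv (Finset.notMem_empty v)⟩
    have hnoiso : ∀ v ∈ A, ∃ w ∈ A, G.Adj v w := by
      intro v hv
      by_contra hc
      push_neg at hc
      have hmem : v ∈ isoF G A ∅ :=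
        mem_isoF.2 ⟨hv, Finset.notMem_empty v, fun w hw hadj => absurd hadj (hc w hw)⟩
      have h0 := hcond ∅ (Finset.empty_subset _)
      simp only [Finset.card_empty, Nat.mul_zero, Nat.le_zero, Finset.card_eq_zero] at h0
      rw [h0] at hmem
      exact Finset.notMem_empty _ hmem
    -- Branch 1 : a tight set
    by_cases hB1 : ∃ S ⊆ A, S.Nonempty ∧ 2 * S.card ≤ (isoF G A S).card
    · obtain ⟨S, hSA, hSne, hSc⟩ := hB1
      have hEq : (isoF G A S).card = 2 * S.card := le_antisymm (hcond S hSA) hSc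
      refine gadget hSA hSne (fun J hJ => h1_of_cond hcond hSA hJ) ?_ ?_ ih
      · intro J hJ
        have hJc := h1_of_cond hcond hSA hJ
        have hNS := Finset.card_le_card (NS_subset (G := G) (S := S) (J := J))
        omega
      · intro T hT
        have hTA : T ⊆ A := hT.trans (Finset.sdiff_subset)
        have hd : Disjoint S T := by
          rw [Finset.disjoint_right]
          intro x hxT hxS
          exact (Finset.mem_sdiff.1 (hT hxT)).2 (Finset.mem_union_left _ hxS)
        have hc := hcond (S ∪ T) (Finset.union_subset hSA hTA)
        rw [Finset.card_union_of_disjoint hd] at hc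
        omega
    have nb1 : ∀ S ⊆ A, S.Nonempty → (isoF G A S).card + 1 ≤ 2 * S.card := by
      intro S hSA hSne
      have h := hcond S hSA
      have hne : ¬ (2 * S.card ≤ (isoF G A S).card) := fun hc => hB1 ⟨S, hSA, hSne, hc⟩
      omega
    -- Branch 2 : a vertex of degree one
    by_cases hB2 : ∃ w ∈ A, ∃ v, A.filter (fun y => G.Adj w y) = {v}
    · obtain ⟨w, hwA, v, hfil⟩ := hB2
      have hvmem : v ∈ A.filter (fun y => G.Adj w y) := hfil ▸ Finset.mem_singleton_self v
      obtain ⟨hvA, hadj⟩ := Finset.mem_filter.1 hvmem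
      have hwv : w ≠ v := fun h => G.irrefl (h ▸ hadj)
      have hRA : ({w, v} : Finset V) ⊆ A := by
        intro x hx
        rcases Finset.mem_insert.1 hx with rfl | hx
        · exact hwA
        · rw [Finset.mem_singleton.1 hx]; exact hvA
      refine remove_glue hRA ⟨w, Finset.mem_insert_self _ _⟩ (pack_pair hwv hadj.symm) ?_ ih
      intro T hT
      have hvT : v ∉ T := fun hc =>
        (Finset.mem_sdiff.1 (hT hc)).2 (by simp)
      have hwT : w ∉ T := fun hc =>
        (Finset.mem_sdiff.1 (hT hc)).2 (by simp)
      have hTA : T ⊆ A := hT.trans Finset.sdiff_subset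
      have hsub : isoF G (A \ {w, v}) T ∪ {w} ⊆ isoF G A (insert v T) := by
        intro x hx
        rcases Finset.mem_union.1 hx with hx' | hx'
        · obtain ⟨hxA', hxT, hnb⟩ := mem_isoF.1 hx'
          obtain ⟨hxA, hxR⟩ := Finset.mem_sdiff.1 hxA'
          refine mem_isoF.2 ⟨hxA, ?_, ?_⟩
          · intro hc
            rcases Finset.mem_insert.1 hc with rfl | hc
            · exact hxR (by simp)
            · exact hxT hc
          · intro y hy hadjy
            by_cases hyv : y = v
            · rw [hyv]; exact Finset.mem_insert_self _ _
            by_cases hyw : y = w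
            · exfalso
              have : x ∈ A.filter (fun z => G.Adj w z) :=
                Finset.mem_filter.2 ⟨hxA, (hyw ▸ hadjy).symm⟩
              rw [hfil, Finset.mem_singleton] at this
              exact hxR (by simp [this])
            · refine Finset.mem_insert_of_mem (hnb y ?_ hadjy)
              refine Finset.mem_sdiff.2 ⟨hy, fun hc => ?_⟩
              rcases Finset.mem_insert.1 hc with h | h
              · exact hyw h
              · exact hyv (Finset.mem_singleton.1 h)
        · rw [Finset.mem_singleton.1 hx']
          refine mem_isoF.2 ⟨hwA, ?_, ?_⟩
          · intro hc
            rcases Finset.mem_insert.1 hc with h | h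
            · exact hwv h
            · exact hwT h
          · intro y hy hadjy
            have : y ∈ A.filter (fun z => G.Adj w z) := Finset.mem_filter.2 ⟨hy, hadjy⟩
            rw [hfil, Finset.mem_singleton] at this
            rw [this]; exact Finset.mem_insert_self _ _
      have hdisj : Disjoint (isoF G (A \ {w, v}) T) ({w} : Finset V) := by
        rw [Finset.disjoint_right]
        intro x hx hx2
        rw [Finset.mem_singleton] at hx
        subst hx
        exact (Finset.mem_sdiff.1 (isoF_subset hx2)).2 (by simp)
      have hcards : (isoF G (A \ {w, v}) T).card + 1 ≤ (isoF G A (insert v T)).card := by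
        have h := Finset.card_le_card hsub
        rwa [Finset.card_union_of_disjoint hdisj, Finset.card_singleton] at h
      have hS₀A : insert v T ⊆ A := Finset.insert_subset hvA hTA
      have hcount := nb1 (insert v T) hS₀A ⟨v, Finset.mem_insert_self _ _⟩
      rw [Finset.card_insert_of_notMem hvT] at hcount
      omega
    -- Branch 3 : slack exactly one
    by_cases hB3 : ∃ S ⊆ A, (isoF G A S).card + 1 = 2 * S.card
    · obtain ⟨S, hSA, hEq⟩ := hB3
      have hSne : S.Nonempty := by
        rw [← Finset.card_pos]; omega
      refine gadget hSA hSne (fun J hJ => h1_of_cond hcond hSA hJ) ?_ ?_ ih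
      · intro J hJ
        have hScard : 1 ≤ S.card := Finset.card_pos.2 hSne
        rcases Finset.eq_empty_or_nonempty J with rfl | hJne
        · simp only [Finset.card_empty]
          omega
        · have hNSne := NS_nonempty hcond hJ hJne
          have hNB := nb1 (NS G S J) (NS_subset.trans hSA) hNSne
          have hKey := Finset.card_le_card (keyJ hJ)
          have hNS := Finset.card_le_card (NS_subset (G := G) (S := S) (J := J))
          omega
      · intro T hT
        have hTA : T ⊆ A := hT.trans (Finset.sdiff_subset)
        have hd : Disjoint S T := by
          rw [Finset.disjoint_right]
          intro x hxT hxS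
          exact (Finset.mem_sdiff.1 (hT hxT)).2 (Finset.mem_union_left _ hxS)
        have hc := nb1 (S ∪ T) (Finset.union_subset hSA hTA)
          (hSne.mono Finset.subset_union_left)
        rw [Finset.card_union_of_disjoint hd] at hc
        omega
    have nb3 : ∀ S ⊆ A, S.Nonempty → (isoF G A S).card + 2 ≤ 2 * S.card := by
      intro S hSA hSne
      have h := nb1 S hSA hSne
      have hne : (isoF G A S).card + 1 ≠ 2 * S.card := fun hc => hB3 ⟨S, hSA, hc⟩
      omega
    -- Branch 4 : slack exactly two with a large set
    by_cases hB4 : ∃ S ⊆ A, 2 ≤ S.card ∧ (isoF G A S).card + 2 = 2 * S.card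
    · obtain ⟨S, hSA, hS2, hEq⟩ := hB4
      have hSne : S.Nonempty := by rw [← Finset.card_pos]; omega
      refine gadget hSA hSne (fun J hJ => h1_of_cond hcond hSA hJ) ?_ ?_ ih
      · intro J hJ
        rcases Finset.eq_empty_or_nonempty J with rfl | hJne
        · simp only [Finset.card_empty]
          omega
        · have hNSne := NS_nonempty hcond hJ hJne
          have hNB := nb3 (NS G S J) (NS_subset.trans hSA) hNSne
          have hKey := Finset.card_le_card (keyJ hJ)
          have hNS := Finset.card_le_card (NS_subset (G := G) (S := S) (J := J))
          omega
      · intro T hT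
        have hTA : T ⊆ A := hT.trans (Finset.sdiff_subset)
        have hd : Disjoint S T := by
          rw [Finset.disjoint_right]
          intro x hxT hxS
          exact (Finset.mem_sdiff.1 (hT hxT)).2 (Finset.mem_union_left _ hxS)
        have hc := nb3 (S ∪ T) (Finset.union_subset hSA hTA)
          (hSne.mono Finset.subset_union_left)
        rw [Finset.card_union_of_disjoint hd] at hc
        omega
    have nb4 : ∀ S ⊆ A, 2 ≤ S.card → (isoF G A S).card + 3 ≤ 2 * S.card := by
      intro S hSA hS2
      have hSne : S.Nonempty := by rw [← Finset.card_pos]; omega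
      have h := nb3 S hSA hSne
      have hne : ¬((isoF G A S).card + 2 = 2 * S.card) := fun hc => hB4 ⟨S, hSA, hS2, hc⟩
      omega
    -- Branch 5 : a vertex of degree two
    by_cases hB5 : ∃ x ∈ A, ∃ u v : V, u ≠ v ∧ A.filter (fun y => G.Adj x y) = {u, v}
    · obtain ⟨x, hxA, u, v, huv, hfil⟩ := hB5
      have humem : u ∈ A.filter (fun y => G.Adj x y) := by rw [hfil]; simp
      have hvmem : v ∈ A.filter (fun y => G.Adj x y) := by rw [hfil]; simp
      obtain ⟨huA, hadju⟩ := Finset.mem_filter.1 humem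
      obtain ⟨hvA, hadjv⟩ := Finset.mem_filter.1 hvmem
      have hxu : x ≠ u := fun h => G.irrefl (h ▸ hadju)
      have hxv : x ≠ v := fun h => G.irrefl (h ▸ hadjv)
      have hRA : ({u, v, x} : Finset V) ⊆ A := by
        intro y hy
        simp only [Finset.mem_insert, Finset.mem_singleton] at hy
        rcases hy with rfl | rfl | rfl
        exacts [huA, hvA, hxA]
      refine remove_glue hRA ⟨u, by simp⟩ (pack_triple huv hxu hxv hadju hadjv) ?_ ih
      intro T hT
      have hnotT : ∀ y ∈ ({u, v, x} : Finset V), y ∉ T := by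
        intro y hy hc
        exact (Finset.mem_sdiff.1 (hT hc)).2 hy
      have hTA : T ⊆ A := hT.trans Finset.sdiff_subset
      set S₀ : Finset V := insert u (insert v T) with hS₀def
      have hsub : isoF G (A \ {u, v, x}) T ∪ {x} ⊆ isoF G A S₀ := by
        intro y hy
        rcases Finset.mem_union.1 hy with hy' | hy'
        · obtain ⟨hyA', hyT, hnb⟩ := mem_isoF.1 hy'
          obtain ⟨hyA, hyR⟩ := Finset.mem_sdiff.1 hyA'
          refine mem_isoF.2 ⟨hyA, ?_, ?_⟩
          · intro hc
            simp only [hS₀def, Finset.mem_insert] at hc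
            rcases hc with rfl | rfl | hc
            · exact hyR (by simp)
            · exact hyR (by simp)
            · exact hyT hc
          · intro z hz hadjz
            by_cases hzu : z = u
            · rw [hzu]; simp [hS₀def]
            by_cases hzv : z = v
            · rw [hzv]; simp [hS₀def]
            by_cases hzx : z = x
            · exfalso
              have : y ∈ A.filter (fun s => G.Adj x s) :=
                Finset.mem_filter.2 ⟨hyA, (hzx ▸ hadjz).symm⟩
              rw [hfil] at this
              simp only [Finset.mem_insert, Finset.mem_singleton] at this
              rcases this with rfl | rfl
              · exact hyR (by simp)
              · exact hyR (by simp)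
            · have hzmem : z ∈ A \ {u, v, x} := by
                refine Finset.mem_sdiff.2 ⟨hz, fun hc => ?_⟩
                simp only [Finset.mem_insert, Finset.mem_singleton] at hc
                rcases hc with rfl | rfl | rfl
                exacts [hzu rfl, hzv rfl, hzx rfl]
              have := hnb z hzmem hadjz
              simp [hS₀def, this]
        · rw [Finset.mem_singleton.1 hy']
          refine mem_isoF.2 ⟨hxA, ?_, ?_⟩
          · intro hc
            simp only [hS₀def, Finset.mem_insert] at hc
            rcases hc with rfl | rfl | hc
            · exact hxu rfl
            · exact hxv rfl
            · exact hnotT x (by simp) hc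
          · intro z hz hadjz
            have : z ∈ A.filter (fun s => G.Adj x s) := Finset.mem_filter.2 ⟨hz, hadjz⟩
            rw [hfil] at this
            simp only [Finset.mem_insert, Finset.mem_singleton] at this
            rcases this with rfl | rfl
            · simp [hS₀def]
            · simp [hS₀def]
      have hdisj : Disjoint (isoF G (A \ {u, v, x}) T) ({x} : Finset V) := by
        rw [Finset.disjoint_right]
        intro y hy hy2
        rw [Finset.mem_singleton] at hy
        subst hy
        exact (Finset.mem_sdiff.1 (isoF_subset hy2)).2 (by simp)
      have hcards : (isoF G (A \ {u, v, x}) T).card + 1 ≤ (isoF G A S₀).card := by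
        have h := Finset.card_le_card hsub
        rwa [Finset.card_union_of_disjoint hdisj, Finset.card_singleton] at h
      have hS₀A : S₀ ⊆ A := by
        simp only [hS₀def]
        exact Finset.insert_subset huA (Finset.insert_subset hvA hTA)
      have hS₀card : S₀.card = T.card + 2 := by
        simp only [hS₀def]
        rw [Finset.card_insert_of_notMem, Finset.card_insert_of_notMem (hnotT v (by simp))]
        simp only [Finset.mem_insert]
        rintro (rfl | hc)
        · exact huv rfl
        · exact hnotT u (by simp) hc
      have hcount := nb4 S₀ hS₀A (by omega)
      omega
    -- now minimum degree at least three
    have hdeg3 : ∀ v ∈ A, 3 ≤ (A.filter (fun y => G.Adj v y)).card := by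
      intro v hv
      obtain ⟨w, hw, hadj⟩ := hnoiso v hv
      have hpos : 0 < (A.filter (fun y => G.Adj v y)).card :=
        Finset.card_pos.2 ⟨w, Finset.mem_filter.2 ⟨hw, hadj⟩⟩
      have hc1 : (A.filter (fun y => G.Adj v y)).card ≠ 1 := by
        intro hc
        obtain ⟨u, hu⟩ := Finset.card_eq_one.1 hc
        exact hB2 ⟨v, hv, u, hu⟩
      have hc2 : (A.filter (fun y => G.Adj v y)).card ≠ 2 := by
        intro hc
        obtain ⟨u, u', hne, huu⟩ := Finset.card_eq_two.1 hc
        exact hB5 ⟨v, hv, u, u', hne, huu⟩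
      omega
    -- Branch 6 : slack exactly three
    by_cases hB6 : ∃ S ⊆ A, (isoF G A S).card + 3 = 2 * S.card
    · obtain ⟨S, hSA, hEq⟩ := hB6
      have hiso0 : ∀ S' : Finset V, S'.card < 3 → (isoF G A S').card = 0 := by
        intro S' hS'
        rw [isoF_empty_of_mindeg hdeg3 hS', Finset.card_empty]
      have h3S : 3 ≤ S.card := by
        by_contra hc
        push_neg at hc
        have := hiso0 S hc
        omega
      have hSne : S.Nonempty := by rw [← Finset.card_pos]; omega
      refine gadget hSA hSne (fun J hJ => h1_of_cond hcond hSA hJ) ?_ ?_ ih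
      · intro J hJ
        have hKey := Finset.card_le_card (keyJ hJ)
        have hNS := Finset.card_le_card (NS_subset (G := G) (S := S) (J := J))
        by_cases hNS2 : (NS G S J).card < 3
        · have := hiso0 (NS G S J) hNS2
          omega
        · have hNB := nb4 (NS G S J) (NS_subset.trans hSA) (by omega)
          omega
      · intro T hT
        have hTA : T ⊆ A := hT.trans (Finset.sdiff_subset)
        have hd : Disjoint S T := by
          rw [Finset.disjoint_right]
          intro x hxT hxS
          exact (Finset.mem_sdiff.1 (hT hxT)).2 (Finset.mem_union_left _ hxS)
        have hcardST : 2 ≤ (S ∪ T).card := by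
          have := Finset.card_le_card (Finset.subset_union_left (s₁ := S) (s₂ := T))
          omega
        have hc := nb4 (S ∪ T) (Finset.union_subset hSA hTA) hcardST
        rw [Finset.card_union_of_disjoint hd] at hc
        omega
    have nb6 : ∀ S ⊆ A, 2 ≤ S.card → (isoF G A S).card + 4 ≤ 2 * S.card := by
      intro S hSA hS2
      have h := nb4 S hSA hS2
      have hne : ¬((isoF G A S).card + 3 = 2 * S.card) := fun hc => hB6 ⟨S, hSA, hc⟩
      omega
    -- Branch 7 : remove any edge
    obtain ⟨x, hxA⟩ := hAne
    obtain ⟨u, huA, hadj⟩ := hnoiso x hxA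
    have hxu : x ≠ u := fun h => G.irrefl (h ▸ hadj)
    have hRA : ({x, u} : Finset V) ⊆ A := by
      intro y hy
      rcases Finset.mem_insert.1 hy with rfl | hy
      · exact hxA
      · rw [Finset.mem_singleton.1 hy]; exact huA
    refine remove_glue hRA ⟨x, Finset.mem_insert_self _ _⟩ (pack_pair hxu hadj.symm) ?_ ih
    intro T hT
    have hTA : T ⊆ A := hT.trans Finset.sdiff_subset
    have hnotT : ∀ y ∈ ({x, u} : Finset V), y ∉ T := fun y hy hc =>
      (Finset.mem_sdiff.1 (hT hc)).2 hy
    set S₀ : Finset V := insert x (insert u T) with hS₀def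
    have hsub : isoF G (A \ {x, u}) T ⊆ isoF G A S₀ := by
      intro y hy
      obtain ⟨hyA', hyT, hnb⟩ := mem_isoF.1 hy
      obtain ⟨hyA, hyR⟩ := Finset.mem_sdiff.1 hyA'
      refine mem_isoF.2 ⟨hyA, ?_, ?_⟩
      · intro hc
        simp only [hS₀def, Finset.mem_insert] at hc
        rcases hc with rfl | rfl | hc
        · exact hyR (by simp)
        · exact hyR (by simp)
        · exact hyT hc
      · intro z hz hadjz
        by_cases hzx : z = x
        · rw [hzx]; simp [hS₀def]
        by_cases hzu : z = u
        · rw [hzu]; simp [hS₀def]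
        · have hzmem : z ∈ A \ {x, u} := by
            refine Finset.mem_sdiff.2 ⟨hz, fun hc => ?_⟩
            rcases Finset.mem_insert.1 hc with h | h
            exacts [hzx h, hzu (Finset.mem_singleton.1 h)]
          have := hnb z hzmem hadjz
          simp [hS₀def, this]
    have hS₀A : S₀ ⊆ A := by
      simp only [hS₀def]
      exact Finset.insert_subset hxA (Finset.insert_subset huA hTA)
    have hS₀card : S₀.card = T.card + 2 := by
      simp only [hS₀def]
      rw [Finset.card_insert_of_notMem, Finset.card_insert_of_notMem (hnotT u (by simp))]
      simp only [Finset.mem_insert]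
      rintro (rfl | hc)
      · exact hxu rfl
      · exact hnotT x (by simp) hc
    have hcount := nb6 S₀ hS₀A (by omega)
    have hcards := Finset.card_le_card hsub
    omega

theorem exists_factor_of_pack {p : V → V} (hp : IsPack G Finset.univ p) :
    ∃ F, SCF.IsK11K12CycleFactor G F := by
  have hidem : ∀ v, p (p v) = p v := fun v => (hp.1 v (Finset.mem_univ v)).2.1
  have hadjp : ∀ v, p v ≠ v → G.Adj (p v) v := fun v => (hp.1 v (Finset.mem_univ v)).2.2
  have hload := fun c => hp.2 c (Finset.mem_univ c)
  let F : SimpleGraph V :=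
    ⟨fun x y => x ≠ y ∧ (p x = y ∨ p y = x),
      ⟨fun x y h => ⟨Ne.symm h.1, h.2.symm⟩⟩, ⟨fun x h => h.1 rfl⟩⟩
  have hFadj : ∀ x y, F.Adj x y ↔ x ≠ y ∧ (p x = y ∨ p y = x) := fun _ _ => Iff.rfl
  refine ⟨F, ?_, ?_⟩
  case refine_1 =>
    intro x y h
    obtain ⟨hne, h | h⟩ := (hFadj x y).1 h
    · have := hadjp x (fun hc => hne (h ▸ hc).symm)
      rw [h] at this
      exact this.symm
    · have := hadjp y (fun hc => hne (h ▸ hc))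
      rw [h] at this
      exact this
  case refine_2 =>
    have hnb_center : ∀ c, p c = c →
        F.neighborSet c = ↑(Finset.univ.filter (fun w => p w = c ∧ w ≠ c)) := by
      intro c hc
      ext w
      simp only [SimpleGraph.mem_neighborSet, Finset.coe_filter, Set.mem_setOf_eq,
        Finset.mem_univ, true_and, hFadj]
      constructor
      · rintro ⟨hne, h | h⟩
        · exact absurd (hc.symm.trans h) hne
        · exact ⟨h, fun hw => hne hw.symm⟩
      · rintro ⟨h1, h2⟩
        exact ⟨fun hcw => h2 hcw.symm, Or.inr h1⟩
    have hnb_leaf : ∀ v, p v ≠ v → F.neighborSet v = {p v} := by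
      intro v hpv
      ext w
      simp only [SimpleGraph.mem_neighborSet, Set.mem_singleton_iff, hFadj]
      constructor
      · rintro ⟨hne, h | h⟩
        · exact h.symm
        · exfalso
          have h2 := hidem w
          rw [h] at h2
          exact hpv h2
      · rintro rfl
        exact ⟨Ne.symm hpv, Or.inl rfl⟩
    have hdeg_leaf : ∀ v, p v ≠ v → SCF.deg F v = 1 := by
      intro v hpv
      rw [SCF.deg, hnb_leaf v hpv, Set.ncard_singleton]
    have hdeg_cent : ∀ c, p c = c →
        SCF.deg F c = (Finset.univ.filter (fun w => p w = c ∧ w ≠ c)).card := by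
      intro c hc
      rw [SCF.deg, hnb_center c hc, Set.ncard_coe_finset]
    have hAdj_center : ∀ c, p c = c → ∀ w, F.Adj c w → p w = c ∧ w ≠ c := by
      intro c hc w hw
      rw [hFadj] at hw
      obtain ⟨hne, h | h⟩ := hw
      · exact absurd (hc.symm.trans h) hne
      · exact ⟨h, fun hwc => hne hwc.symm⟩
    intro v
    have hcc : p (p v) = p v := hidem v
    rcases hload (p v) hcc with h1 | h2
    · -- K_{1,1} component
      left
      obtain ⟨l, hl⟩ := Finset.card_eq_one.1 h1
      have hlmem : l ∈ Finset.univ.filter (fun w => p w = p v ∧ w ≠ p v) := by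
        rw [hl]; exact Finset.mem_singleton_self l
      obtain ⟨-, hlp, hlne⟩ : l ∈ Finset.univ ∧ p l = p v ∧ l ≠ p v := by
        simpa using Finset.mem_filter.1 hlmem
      have hdegc : SCF.deg F (p v) = 1 := by rw [hdeg_cent (p v) hcc, h1]
      have hdegl : SCF.deg F l = 1 := hdeg_leaf l (fun hc => hlne (hc.symm.trans hlp))
      by_cases hpv : p v = v
      · -- v is the center
        constructor
        · exact hpv ▸ hdegc
        · intro w hw
          have := hAdj_center v (hpv ▸ hcc) w (by exact hw)
          have hwl : w = l := by
            have : w ∈ Finset.univ.filter (fun z => p z = p v ∧ z ≠ p v) := by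
              simp only [Finset.mem_filter, Finset.mem_univ, true_and]
              rw [hpv]
              exact this
            rw [hl, Finset.mem_singleton] at this
            exact this
          rw [hwl]
          exact hdegl
      · -- v is the leaf, so v = l
        have hvl : v = l := by
          have : v ∈ Finset.univ.filter (fun w => p w = p v ∧ w ≠ p v) :=
            Finset.mem_filter.2 ⟨Finset.mem_univ v, rfl, fun hc => hpv hc.symm⟩
          rw [hl, Finset.mem_singleton] at this
          exact this
        constructor
        · rw [hvl]; exact hdegl
        · intro w hw
          rw [hFadj] at hw
          obtain ⟨hne, h | h⟩ := hw
          · rw [← h]; exact hdegc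
          · exfalso
            have h2 := hidem w
            rw [h] at h2
            exact hpv h2
    · -- K_{1,2} component
      right; left
      obtain ⟨a, b, hab, hLab⟩ := Finset.card_eq_two.1 h2
      have hamem : a ∈ Finset.univ.filter (fun w => p w = p v ∧ w ≠ p v) := by
        rw [hLab]; simp
      have hbmem : b ∈ Finset.univ.filter (fun w => p w = p v ∧ w ≠ p v) := by
        rw [hLab]; simp
      obtain ⟨-, hap, hane⟩ : a ∈ Finset.univ ∧ p a = p v ∧ a ≠ p v := by
        simpa using Finset.mem_filter.1 hamem
      obtain ⟨-, hbp, hbne⟩ : b ∈ Finset.univ ∧ p b = p v ∧ b ≠ p v := by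
        simpa using Finset.mem_filter.1 hbmem
      refine ⟨p v, a, b, hab, ?_, ?_, ?_, ?_, ?_, ?_⟩
      · exact (hFadj _ _).2 ⟨fun hc => hane hc.symm, Or.inr hap⟩
      · exact (hFadj _ _).2 ⟨fun hc => hbne hc.symm, Or.inr hbp⟩
      · rw [hdeg_cent (p v) hcc, hLab]
        rw [Finset.card_insert_of_notMem (by simpa using hab), Finset.card_singleton]
      · exact hdeg_leaf a (fun hc => hane (hc.symm.trans hap))
      · exact hdeg_leaf b (fun hc => hbne (hc.symm.trans hbp))
      · by_cases hpv : p v = v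
        · exact Or.inl hpv.symm
        · have : v ∈ Finset.univ.filter (fun w => p w = p v ∧ w ≠ p v) :=
            Finset.mem_filter.2 ⟨Finset.mem_univ v, rfl, fun hc => hpv hc.symm⟩
          rw [hLab] at this
          simp only [Finset.mem_insert, Finset.mem_singleton] at this
          rcases this with rfl | rfl
          · exact Or.inr (Or.inl rfl)
          · exact Or.inr (Or.inr rfl)

theorem cond_of_factor {F : SimpleGraph V} [DecidableRel F.Adj] (hle : F ≤ G)
    (hcomp : ∀ v, SCF.IsK11Comp F v ∨ SCF.IsK12Comp F v ∨ SCF.IsCycleComp F v) :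
    ∀ S : Set V, SCF.iso G S ≤ 2 * S.ncard := by
  have hdeg : ∀ v, SCF.deg F v = 1 ∨ SCF.deg F v = 2 := by
    intro v
    rcases hcomp v with h | h | h
    · exact Or.inl h.1
    · obtain ⟨c, a, b, hab, h1, h2, hc, ha, hb, hv⟩ := h
      rcases hv with rfl | rfl | rfl
      exacts [Or.inr hc, Or.inl ha, Or.inl hb]
    · exact Or.inr (h v (SimpleGraph.Reachable.refl v))
  have hdegF : ∀ v, SCF.deg F v = (F.neighborFinset v).card := by
    intro v
    rw [SCF.deg]
    exact Set.ncard_eq_toFinset_card' _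
  intro S
  classical
  set IS : Finset V := Finset.univ.filter (fun v => v ∉ S ∧ ∀ w, G.Adj v w → w ∈ S)
    with hISdef
  have hiso : SCF.iso G S = IS.card := by
    have hseteq : {v | v ∉ S ∧ ∀ w, G.Adj v w → w ∈ S} = ↑IS := by
      ext v
      simp [hISdef]
    rw [SCF.iso, hseteq, Set.ncard_coe_finset]
  set SF : Finset V := (S.toFinite).toFinset with hSFdef
  have hSF : S.ncard = SF.card := Set.ncard_eq_toFinset_card S S.toFinite
  have hSFmem : ∀ v, v ∈ SF ↔ v ∈ S := fun v => Set.Finite.mem_toFinset _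
  have key1 : ∀ v ∈ IS, 1 ≤ (SF.filter (fun s => F.Adj v s)).card := by
    intro v hv
    obtain ⟨-, hvS, hnb⟩ : v ∈ Finset.univ ∧ v ∉ S ∧ ∀ w, G.Adj v w → w ∈ S := by
      simpa [hISdef] using Finset.mem_filter.1 hv
    have hpos : 0 < SCF.deg F v := by rcases hdeg v with h | h <;> omega
    rw [hdegF] at hpos
    obtain ⟨w, hw⟩ := Finset.card_pos.1 hpos
    have hFadj : F.Adj v w := (SimpleGraph.mem_neighborFinset _ _ _).1 hw
    have hwS : w ∈ S := hnb w (hle hFadj)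
    exact Finset.card_pos.2 ⟨w, Finset.mem_filter.2 ⟨(hSFmem w).2 hwS, hFadj⟩⟩
  have key2 : ∀ s ∈ SF, (IS.filter (fun v => F.Adj v s)).card ≤ 2 := by
    intro s _
    have hsub : IS.filter (fun v => F.Adj v s) ⊆ F.neighborFinset s := by
      intro v hv
      exact (SimpleGraph.mem_neighborFinset _ _ _).2 (Finset.mem_filter.1 hv).2.symm
    have := Finset.card_le_card hsub
    rw [← hdegF] at this
    rcases hdeg s with h | h <;> omega
  have hswap : ∑ v ∈ IS, (SF.filter (fun s => F.Adj v s)).card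
      = ∑ s ∈ SF, (IS.filter (fun v => F.Adj v s)).card := by
    simp_rw [Finset.card_filter]
    rw [Finset.sum_comm]
  have h1 : IS.card ≤ ∑ v ∈ IS, (SF.filter (fun s => F.Adj v s)).card := by
    rw [Finset.card_eq_sum_ones]
    exact Finset.sum_le_sum key1
  have h2 : ∑ s ∈ SF, (IS.filter (fun v => F.Adj v s)).card ≤ 2 * SF.card := by
    calc ∑ s ∈ SF, (IS.filter (fun v => F.Adj v s)).card ≤ ∑ _s ∈ SF, 2 :=
          Finset.sum_le_sum key2
      _ = 2 * SF.card := by rw [Finset.sum_const, smul_eq_mul, Nat.mul_comm]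
  rw [hiso, hSF]
  omega

end StmtThree

/-- `G` has a `{K_{1,1}, K_{1,2}, C_m : m ≥ 3}`-factor iff
`iso(G-S) ≤ 2|S|` for all `S`. -/
theorem stmt3 {V : Type*} [Fintype V] (G : SimpleGraph V) :
    (∃ F, IsK11K12CycleFactor G F) ↔ ∀ S : Set V, iso G S ≤ 2 * S.ncard := by
  classical
  constructor
  · rintro ⟨F, hF⟩
    exact StmtThree.cond_of_factor hF.1 hF.2
  · intro h
    have hcond : StmtThree.Cond G Finset.univ := by
      intro S hSA
      have hseteq : {v | v ∉ (↑S : Set V) ∧ ∀ w, G.Adj v w → w ∈ (↑S : Set V)}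
          = ↑(StmtThree.isoF G Finset.univ S) := by
        ext v
        simp [StmtThree.mem_isoF]
      have h2 := h ↑S
      rw [SCF.iso, hseteq, Set.ncard_coe_finset, Set.ncard_coe_finset] at h2
      exact h2
    obtain ⟨p, hp⟩ := StmtThree.main Finset.univ hcond
    exact StmtThree.exists_factor_of_pack hp
end

section
/- Let n ≥ 2 be an integer. A finite simple graph G has a spanning subgraph each of whose components is a star K_{1,i} with 1 ≤ i ≤ n if and only if iso(G−S) ≤ n·|S| for every subset S of V(G). -/
open Finset

open SCF

/-
Both conditions are equivalent to the existence of a map `g : V → V` sending every vertex to a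
neighbour and hitting every vertex at most `n` times. A star factor gives such a map (send each
vertex to a neighbour in its star), and such a map sends the isolated vertices of `G - S` into `S`,
at most `n` to each vertex. Conversely, Hall's theorem yields `g` from the isolated-vertex
condition: for `X ⊆ V` with neighbourhood `N`, the vertices of `X \ N` are isolated in
`G - (N \ X)`.

Among all such `g` take one maximising the number of vertices whose image lies on a 2-cycle of
`g`. If `v` is not such a vertex, neither is any vertex mapped to `v`; counting the preimages of
these vertices shows, as `n ≥ 2`, that one of them is hit fewer than `n` times, and redirecting
`g (g v)` to that `v` improves `g`. Hence `g ∘ g ∘ g = g`, so the graph of `g` is a disjoint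
union of double stars, which split into stars with at most `n` leaves.
-/

namespace SCF

variable {V : Type*} [Fintype V]

theorem deg_pos_and_le_of_isStarAtMostComp {F : SimpleGraph V} {n : ℕ}
    (hF : ∀ v, IsStarAtMostComp F n v) (v : V) : 0 < deg F v ∧ deg F v ≤ n := by
  obtain ⟨c, rfl | hcv, hpos, hle, hleaf⟩ := hF v
  · exact ⟨hpos, hle⟩
  · rw [hleaf v hcv]
    omega

variable [DecidableEq V]

def indeg (g : V → V) (c : V) : ℕ := #{x | g x = c}

def IsBoundedNeighborMap (G : SimpleGraph V) (n : ℕ) (g : V → V) : Prop :=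
  (∀ v, G.Adj v (g v)) ∧ ∀ c, indeg g c ≤ n

variable {G : SimpleGraph V} {n : ℕ} {g : V → V}

theorem IsBoundedNeighborMap.iso_le (hg : IsBoundedNeighborMap G n g)
    (S : Set V) : iso G S ≤ n * S.ncard := by
  classical
  rw [iso, Set.ncard_eq_toFinset_card', Set.ncard_eq_toFinset_card']
  refine card_le_mul_card_image_of_maps_to (f := g) (fun v hv => ?_) n fun c _ => ?_
  · rw [Set.mem_toFinset] at hv ⊢
    exact hv.2 _ (hg.1 v)
  · exact (card_le_card (filter_subset_filter _ (subset_univ _))).trans (hg.2 c)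

theorem exists_isBoundedNeighborMap_of_isStarAtMostComp {F : SimpleGraph V} (hFG : F ≤ G)
    (hF : ∀ v, IsStarAtMostComp F n v) : ∃ g, IsBoundedNeighborMap G n g := by
  have hdeg := deg_pos_and_le_of_isStarAtMostComp hF
  choose g hg using fun v => Set.nonempty_of_ncard_ne_zero (hdeg v).1.ne'
  refine ⟨g, fun v => hFG (hg v), fun c => ?_⟩
  calc indeg g c ≤ deg F c := by
        rw [indeg, deg, ← Set.ncard_coe_finset]
        refine Set.ncard_le_ncard (fun x hx => ?_)
        simp only [coe_filter, mem_univ, true_and, Set.mem_ofPred_eq] at hx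
        exact hx ▸ (hg x).symm
    _ ≤ n := (hdeg c).2

theorem card_le_mul_card_biUnion_neighborFinset [DecidableRel G.Adj] (hn : 1 ≤ n)
    (h : ∀ S : Set V, iso G S ≤ n * S.ncard) (s : Finset V) :
    #s ≤ n * #(s.biUnion fun v => G.neighborFinset v) := by
  set N := s.biUnion fun v => G.neighborFinset v
  have hN : ∀ {v w}, v ∈ s → G.Adj v w → w ∈ N := fun hv hvw =>
    mem_biUnion.2 ⟨_, hv, (G.mem_neighborFinset _ _).2 hvw⟩
  -- The vertices of `s` outside `N` have all their neighbours in `N \ s`.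
  have hiso : #(s \ N) ≤ iso G ↑(N \ s) := by
    rw [iso, ← Set.ncard_coe_finset]
    refine Set.ncard_le_ncard (fun v hv => ?_)
    simp only [coe_sdiff, Set.mem_sdiff, mem_coe] at hv ⊢
    exact ⟨fun hv' => hv.2 hv'.1,
      fun w hvw => ⟨hN hv.1 hvw, fun hw => hv.2 (hN hw hvw.symm)⟩⟩
  have hS := h ↑(N \ s)
  rw [Set.ncard_coe_finset] at hS
  have hs := card_sdiff_add_card_inter s N
  have hN' := card_sdiff_add_card_inter N s
  rw [inter_comm] at hN'
  nlinarith

theorem exists_isBoundedNeighborMap_of_iso_le (hn : 1 ≤ n)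
    (h : ∀ S : Set V, iso G S ≤ n * S.ncard) : ∃ g, IsBoundedNeighborMap G n g := by
  classical
  -- Hall's theorem, with every vertex split into `n` copies.
  obtain ⟨f, hinj, hf⟩ := (all_card_le_biUnion_card_iff_exists_injective
    fun v => G.neighborFinset v ×ˢ (univ : Finset (Fin n))).1 fun s => by
      have hprod : (s.biUnion fun v => G.neighborFinset v ×ˢ (univ : Finset (Fin n))) =
          (s.biUnion fun v => G.neighborFinset v) ×ˢ univ := by
        ext; simp
      rw [hprod, card_product, card_univ, Fintype.card_fin, mul_comm]
      exact card_le_mul_card_biUnion_neighborFinset hn h s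
  refine ⟨fun v => (f v).1, fun v => (G.mem_neighborFinset _ _).1 (mem_product.1 (hf v)).1,
    fun c => ?_⟩
  calc indeg (fun v => (f v).1) c ≤ #(univ : Finset (Fin n)) :=
        card_le_card_of_injOn (fun v => (f v).2) (fun _ _ => mem_coe.2 (mem_univ _))
          fun x hx y hy hxy => hinj (Prod.ext (by simp_all) hxy)
    _ = n := by simp

def settled (g : V → V) : Finset V := {v | g (g (g v)) = g v}

theorem exists_notMem_settled_indeg_lt (hn : 2 ≤ n) {v : V} (hv : v ∉ settled g) :
    ∃ u ∉ settled g, indeg g u < n := by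
  by_contra! hall
  set B := (settled g)ᶜ
  -- The in-neighbours of an unsettled vertex are unsettled.
  have hpre : #{x | g x ∈ B} ≤ #B :=
    card_le_card fun x hx => by
      simp only [B, settled, mem_compl, mem_filter, mem_univ, true_and] at hx ⊢
      exact fun hx' => hx (by rw [hx'])
  have hsum : n * #B ≤ #{x | g x ∈ B} := by
    rw [← sum_card_fiberwise_eq_card_filter, mul_comm, ← smul_eq_mul, ← sum_const]
    exact sum_le_sum fun u hu => hall u (mem_compl.1 hu)
  have hB : 0 < #B := card_pos.2 ⟨v, mem_compl.2 hv⟩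
  nlinarith

theorem IsBoundedNeighborMap.update (hg : IsBoundedNeighborMap G n g) {v : V}
    (hv : indeg g v < n) : IsBoundedNeighborMap G n (Function.update g (g v) v) := by
  refine ⟨fun x => ?_, fun c => ?_⟩
  · by_cases hx : x = g v
    · subst hx
      simpa using (hg.1 v).symm
    · simpa [hx] using hg.1 x
  · by_cases hc : c = v
    · subst hc
      calc indeg (Function.update g (g c) c) c ≤ #(insert (g c) ({x | g x = c} : Finset V)) :=
            card_le_card fun x hx => by
              by_cases hx' : x = g c <;> simp_all [Function.update_of_ne]
        _ ≤ indeg g c + 1 := card_insert_le _ _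
        _ ≤ n := hv
    · refine (card_le_card fun x hx => ?_).trans (hg.2 c)
      by_cases hx' : x = g v <;> simp_all [Function.update_of_ne]

theorem settled_ssubset_settled_update (hirr : ∀ x, g x ≠ x) {v : V}
    (hv : v ∉ settled g) : settled g ⊂ settled (Function.update g (g v) v) := by
  simp only [settled, mem_filter, mem_univ, true_and] at hv
  have hgv : g v ≠ v := hirr v
  have hoff : ∀ y, g (g y) = y → y ≠ g v ∧ g y ≠ g v := fun y hy =>
    ⟨fun h => hv (by rw [← h, hy]), fun h => hv (by rw [← h, hy, h])⟩
  refine ssubset_iff_of_subset (fun x hx => ?_) |>.2 ⟨v, ?_, ?_⟩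
  · simp only [settled, mem_filter, mem_univ, true_and] at hx ⊢
    by_cases hxv : x = g v
    · simp [hxv, Function.update_of_ne hgv.symm]
    · obtain ⟨h1, h2⟩ := hoff (g x) hx
      rw [Function.update_of_ne hxv, Function.update_of_ne h1, Function.update_of_ne h2, hx]
  · simp [settled, Function.update_of_ne hgv.symm]
  · simpa [settled] using hv

theorem exists_isBoundedNeighborMap_forall_settled (hn : 2 ≤ n)
    (h : ∃ g, IsBoundedNeighborMap G n g) :
    ∃ g, IsBoundedNeighborMap G n g ∧ ∀ v, g (g (g v)) = g v := by
  classical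
  obtain ⟨g₀, hg₀⟩ := h
  obtain ⟨g, hg, hmax⟩ := exists_max_image {g | IsBoundedNeighborMap G n g}
    (fun g => #(settled g)) ⟨g₀, by simpa using hg₀⟩
  simp only [mem_filter, mem_univ, true_and] at hg hmax
  refine ⟨g, hg, fun v => ?_⟩
  by_contra hv
  obtain ⟨u, hu, hlt⟩ := exists_notMem_settled_indeg_lt hn (v := v) (by simpa [settled])
  exact (hmax _ (hg.update hlt)).not_gt <|
    card_lt_card (settled_ssubset_settled_update (fun x => (hg.1 x).ne') hu)

/-- When `g ∘ g ∘ g = g`, every component of the graph of `g` is a double star around a 2-cycle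
of `g`; deleting the 2-cycle edge of each double star both of whose ends carry further leaves
yields a star forest. -/
def starForestOf (g : V → V) : SimpleGraph V :=
  SimpleGraph.fromRel fun a b => g a = b ∧ (g b = a → indeg g a = 1 ∨ indeg g b = 1)

theorem starForestOf_le (hg : ∀ v, G.Adj v (g v)) : starForestOf g ≤ G := by
  rintro a b ⟨-, ⟨rfl, -⟩ | ⟨rfl, -⟩⟩
  exacts [hg a, (hg b).symm]

theorem neighborSet_starForestOf_eq_singleton (hirr : ∀ x, g x ≠ x) {x : V}
    (hx : ∀ y, g y = x → y = g x) : (starForestOf g).neighborSet x = {g x} := by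
  ext y
  simp only [SimpleGraph.mem_neighborSet, starForestOf, SimpleGraph.fromRel_adj,
    Set.mem_singleton_iff]
  constructor
  · rintro ⟨-, ⟨rfl, -⟩ | ⟨hyx, -⟩⟩
    exacts [rfl, hx y hyx]
  · rintro rfl
    refine ⟨(hirr x).symm, Or.inl ⟨rfl, fun hgg => Or.inl ?_⟩⟩
    rw [indeg, card_eq_one]
    exact ⟨g x, eq_singleton_iff_unique_mem.2
      ⟨by simpa using hgg, fun y hy => hx y (by simpa using hy)⟩⟩

theorem deg_starForestOf_center (hirr : ∀ x, g x ≠ x) (hcap : ∀ c, indeg g c ≤ n)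
    (hg3 : ∀ v, g (g (g v)) = g v) {c : V} (hc2 : g (g c) = c)
    (hc : 2 ≤ indeg g c ∨ indeg g (g c) = 1) :
    0 < deg (starForestOf g) c ∧ deg (starForestOf g) c ≤ n ∧
      ∀ w, (starForestOf g).Adj c w → deg (starForestOf g) w = 1 := by
  have hsub : (starForestOf g).neighborSet c ⊆ {y | g y = c} := by
    rintro y ⟨-, ⟨rfl, -⟩ | ⟨hy, -⟩⟩
    exacts [hc2, hy]
  refine ⟨(Set.ncard_pos (Set.toFinite _)).2 ?_, ?_, fun w hw => ?_⟩
  · rcases hc with hc | hc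
    · obtain ⟨y, hy, hyc⟩ := exists_mem_ne (s := {x | g x = c}) hc (g c)
      rw [mem_filter] at hy
      exact ⟨y, hy.2 ▸ hirr y, Or.inr ⟨hy.2, fun h => absurd h.symm hyc⟩⟩
    · exact ⟨g c, (hirr c).symm, Or.inl ⟨rfl, fun _ => Or.inr hc⟩⟩
  · refine le_trans ?_ (hcap c)
    rw [deg, indeg, ← Set.ncard_coe_finset, coe_filter]
    simpa using Set.ncard_le_ncard hsub
  · rw [deg, neighborSet_starForestOf_eq_singleton hirr, Set.ncard_singleton]
    have hwc : g w = c := hsub hw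
    intro z hz
    by_cases hw' : w = g c
    · -- the edge `c — g c` survives only when `g c` is a leaf of `c`
      subst hw'
      have hleaf : indeg g (g c) = 1 := by
        obtain ⟨-, ⟨-, h⟩ | ⟨-, h⟩⟩ := hw
        · rcases h hc2 with h | h <;> omega
        · rcases h rfl with h | h <;> omega
      obtain ⟨a, ha⟩ := card_eq_one.1 hleaf
      have hmem : ∀ x, g x = g c → x = a := fun x hx =>
        mem_singleton.1 (ha ▸ by simpa using hx)
      rw [hwc, hmem z hz, hmem c rfl]
    · exact absurd (by rw [← hwc, ← hz, hg3]) hw'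

theorem isStarAtMostComp_starForestOf (hirr : ∀ x, g x ≠ x) (hcap : ∀ c, indeg g c ≤ n)
    (hg3 : ∀ v, g (g (g v)) = g v) (v : V) : IsStarAtMostComp (starForestOf g) n v := by
  by_cases hv : g (g v) = v ∧ (2 ≤ indeg g v ∨ indeg g (g v) = 1)
  · exact ⟨v, Or.inl rfl, deg_starForestOf_center hirr hcap hg3 hv.1 hv.2⟩
  have hleaf : g (g v) = v → indeg g v = 1 := fun h => by
    have : 0 < indeg g v := card_pos.2 ⟨g v, by simpa using h⟩
    have : ¬2 ≤ indeg g v := fun h2 => hv ⟨h, Or.inl h2⟩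
    omega
  refine ⟨g v, Or.inr ?_, deg_starForestOf_center hirr hcap hg3 (hg3 v) ?_⟩
  · exact (SimpleGraph.fromRel_adj _ _ _).2
      ⟨hirr v, Or.inr ⟨rfl, fun h => Or.inl (hleaf h)⟩⟩
  · by_cases h : g (g v) = v
    · exact Or.inr (h.symm ▸ hleaf h)
    · refine Or.inl (one_lt_card.2 ⟨v, ?_, g (g v), ?_, Ne.symm h⟩) <;> simp [hg3]

end SCF

/-- for `n ≥ 2`, `G` has a `{K_{1,1}, …, K_{1,n}}`-factor iff
`iso(G-S) ≤ n|S|` for all `S`. -/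
theorem stmt4 {V : Type*} [Fintype V] (G : SimpleGraph V) (n : ℕ) (hn : 2 ≤ n) :
    (∃ F, F ≤ G ∧ ∀ v, IsStarAtMostComp F n v) ↔
      ∀ S : Set V, iso G S ≤ n * S.ncard := by
  classical
  constructor
  · rintro ⟨F, hFG, hF⟩ S
    obtain ⟨g, hg⟩ := exists_isBoundedNeighborMap_of_isStarAtMostComp hFG hF
    exact hg.iso_le S
  · intro h
    obtain ⟨g, hg, hg3⟩ := exists_isBoundedNeighborMap_forall_settled hn
      (exists_isBoundedNeighborMap_of_iso_le (by omega) h)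
    exact ⟨starForestOf g, starForestOf_le hg.1,
      isStarAtMostComp_starForestOf (fun x => (hg.1 x).ne') hg.2 hg3⟩
end

section
/- Every finite simple graph with no isolated vertices has a star-cycle factor, i.e., a spanning subgraph each of whose components is a star K_{1,i} for some i ≥ 1 or a cycle C_m with m ≥ 3. -/
open Finset

open SCF

/-- every graph without isolated vertices has a star-cycle factor. -/
theorem stmt5 {V : Type*} [Fintype V] (G : SimpleGraph V) (h : ∀ v, 0 < deg G v) :
    ∃ F, F ≤ G ∧ ∀ v, IsStarComp F v ∨ IsCycleComp F v := by
  classical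
  have finSG : Finite (SimpleGraph V) := by
    exact Finite.of_injective (fun H : SimpleGraph V => H.Adj)
      (fun a b hab => by ext u v; exact iff_of_eq (congrFun (congrFun hab u) v))
  -- maximal matching
  set S : Set (SimpleGraph V) :=
    {M | M ≤ G ∧ ∀ v w w', M.Adj v w → M.Adj v w' → w = w'} with hS
  obtain ⟨M, hMS, hmax⟩ := (Set.toFinite S).exists_maximalFor id S ⟨⊥, bot_le, by simp⟩
  obtain ⟨hMG, huniq⟩ := hMS
  set C : Set V := {v | ∃ w, M.Adj v w} with hC
  have hMcov : ∀ {x y}, M.Adj x y → x ∈ C := fun {x y} hxy => ⟨y, hxy⟩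
  have hnb : ∀ v, ∃ w, G.Adj v w := by
    intro v
    have := (Set.ncard_pos (Set.toFinite _)).mp (h v)
    exact this
  -- every uncovered vertex has a covered neighbor
  have hcov : ∀ v, v ∉ C → ∃ w, G.Adj v w ∧ w ∈ C := by
    intro v hv
    obtain ⟨w, hw⟩ := hnb v
    by_cases hwC : w ∈ C
    · exact ⟨w, hw, hwC⟩
    · exfalso
      set M' : SimpleGraph V := M ⊔ SimpleGraph.fromEdgeSet {s(v, w)} with hM'
      have hEadj : ∀ {a b}, (SimpleGraph.fromEdgeSet {s(v, w)}).Adj a b →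
          (a = v ∧ b = w) ∨ (a = w ∧ b = v) := by
        intro a b hab
        rw [SimpleGraph.fromEdgeSet_adj] at hab
        have := hab.1
        simp only [Set.mem_singleton_iff, Sym2.eq_iff] at this
        exact this
      have hM'S : M' ∈ S := by
        constructor
        · refine sup_le hMG ?_
          intro a b hab
          rcases hEadj hab with ⟨ha, hb⟩ | ⟨ha, hb⟩
          · subst ha; subst hb; exact hw
          · subst ha; subst hb; exact hw.symm
        · intro x y y' hxy hxy'
          have key : ∀ {z z'}, (SimpleGraph.fromEdgeSet {s(v, w)}).Adj z z' → z ∉ C := by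
            intro z z' hzz
            rcases hEadj hzz with ⟨hz, _⟩ | ⟨hz, _⟩
            · subst hz; exact hv
            · subst hz; exact hwC
          rcases (SimpleGraph.sup_adj _ _ _ _).mp hxy with h1 | h1 <;>
            rcases (SimpleGraph.sup_adj _ _ _ _).mp hxy' with h2 | h2
          · exact huniq x y y' h1 h2
          · exact absurd (hMcov h1) (key h2)
          · exact absurd (hMcov h2) (key h1)
          · rcases hEadj h1 with ⟨hx, hy⟩ | ⟨hx, hy⟩ <;>
              rcases hEadj h2 with ⟨hx', hy'⟩ | ⟨hx', hy'⟩
            · exact hy.trans hy'.symm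
            · exact absurd (hx.symm.trans hx') hw.ne
            · exact absurd (hx.symm.trans hx') hw.ne'
            · exact hy.trans hy'.symm
      have hle : M ≤ M' := le_sup_left
      have heq : M = M' := le_antisymm hle (hmax hM'S hle)
      have : M.Adj v w := by
        rw [heq]
        exact (SimpleGraph.sup_adj _ _ _ _).mpr (Or.inr
          ((SimpleGraph.fromEdgeSet_adj _).mpr ⟨rfl, hw.ne⟩))
      exact hv ⟨w, this⟩
  -- pendant assignment
  set m : V → V := fun v => if hv : v ∉ C then (hcov v hv).choose else v with hm
  have hmspec : ∀ v (hv : v ∉ C), G.Adj v (m v) ∧ m v ∈ C := by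
    intro v hv
    simp only [hm, dif_pos hv]
    exact (hcov v hv).choose_spec
  set P : Set V := {a | ∃ v, v ∉ C ∧ m v = a} with hP
  have hPC : P ⊆ C := by
    rintro a ⟨v, hv, rfl⟩
    exact (hmspec v hv).2
  -- the factor
  set F : SimpleGraph V := {
    Adj := fun x y =>
      (M.Adj x y ∧ (x ∉ P ∨ y ∉ P)) ∨ (x ∉ C ∧ y = m x) ∨ (y ∉ C ∧ x = m y)
    symm := by
      constructor
      rintro x y (⟨hxy, hcond⟩ | ⟨hx, hy⟩ | ⟨hy, hx⟩)
      · exact Or.inl ⟨hxy.symm, hcond.symm⟩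
      · exact Or.inr (Or.inr ⟨hx, hy⟩)
      · exact Or.inr (Or.inl ⟨hy, hx⟩)
    loopless := by
      constructor
      rintro v (⟨hvv, _⟩ | ⟨hv, he⟩ | ⟨hv, he⟩)
      · exact M.irrefl hvv
      · exact hv (he ▸ (hmspec v hv).2)
      · exact hv (he ▸ (hmspec v hv).2) } with hF
  have hFadj : ∀ {x y}, F.Adj x y ↔
      (M.Adj x y ∧ (x ∉ P ∨ y ∉ P)) ∨ (x ∉ C ∧ y = m x) ∨ (y ∉ C ∧ x = m y) := by
    intro x y; rw [hF]
  have hFG : F ≤ G := by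
    intro x y hxy
    rcases hFadj.mp hxy with ⟨hxy, _⟩ | ⟨hx, hy⟩ | ⟨hy, hx⟩
    · exact hMG hxy
    · exact hy ▸ (hmspec x hx).1
    · exact hx ▸ ((hmspec y hy).1).symm
  -- pendant vertices have a single neighbor
  have L1 : ∀ v, v ∉ C → F.neighborSet v = {m v} := by
    intro v hv
    ext y
    simp only [SimpleGraph.mem_neighborSet, Set.mem_singleton_iff]
    constructor
    · intro hy
      rcases hFadj.mp hy with ⟨hxy, _⟩ | ⟨_, he⟩ | ⟨_, he⟩
      · exact absurd (hMcov hxy) hv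
      · exact he
      · exact absurd (he ▸ (hmspec y ‹y ∉ C›).2) hv
    · rintro rfl
      exact hFadj.mpr (Or.inr (Or.inl ⟨hv, rfl⟩))
  have deg1 : ∀ v, v ∉ C → deg F v = 1 := by
    intro v hv
    rw [SCF.deg, L1 v hv, Set.ncard_singleton]
  -- covered vertices without pendants have a single neighbor (their partner)
  have L2 : ∀ b a, M.Adj b a → b ∉ P → F.neighborSet b = {a} := by
    intro b a hba hbP
    ext y
    simp only [SimpleGraph.mem_neighborSet, Set.mem_singleton_iff]
    constructor
    · intro hy
      rcases hFadj.mp hy with ⟨hby, _⟩ | ⟨hb, _⟩ | ⟨hyC, he⟩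
      · exact huniq b y a hby hba
      · exact absurd (hMcov hba) hb
      · exact absurd ⟨y, hyC, he.symm⟩ hbP
    · rintro rfl
      exact hFadj.mpr (Or.inl ⟨hba, Or.inl hbP⟩)
  have deg2 : ∀ b a, M.Adj b a → b ∉ P → deg F b = 1 := by
    intro b a hba hbP
    rw [SCF.deg, L2 b a hba hbP, Set.ncard_singleton]
  -- centers with pendants: all neighbors have degree 1
  have Lc : ∀ a ∈ P, 0 < deg F a ∧ ∀ w, F.Adj a w → deg F w = 1 := by
    intro a haP
    constructor
    · obtain ⟨v, hv, hmv⟩ := haP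
      have : F.Adj a v := hFadj.mpr (Or.inr (Or.inr ⟨hv, hmv.symm⟩))
      exact (Set.ncard_pos (Set.toFinite _)).mpr ⟨v, this⟩
    · intro w hw
      rcases hFadj.mp hw with ⟨haw, hcond⟩ | ⟨ha, _⟩ | ⟨hwC, _⟩
      · have hwP : w ∉ P := by
          rcases hcond with h' | h'
          · exact absurd haP h'
          · exact h'
        exact deg2 w a haw.symm hwP
      · exact absurd (hPC haP) ha
      · exact deg1 w hwC
  refine ⟨F, hFG, fun v => Or.inl ?_⟩
  by_cases hvC : v ∈ C
  · by_cases hvP : v ∈ P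
    · obtain ⟨hpos, hall⟩ := Lc v hvP
      exact ⟨v, Or.inl rfl, hpos, hall⟩
    · obtain ⟨b, hvb⟩ := hvC
      by_cases hbP : b ∈ P
      · obtain ⟨hpos, hall⟩ := Lc b hbP
        exact ⟨b, Or.inr (hFadj.mpr (Or.inl ⟨hvb.symm, Or.inr hvP⟩)), hpos, hall⟩
      · refine ⟨v, Or.inl rfl, ?_, ?_⟩
        · have : F.Adj v b := hFadj.mpr (Or.inl ⟨hvb, Or.inl hvP⟩)
          exact (Set.ncard_pos (Set.toFinite _)).mpr ⟨b, this⟩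
        · intro w hw
          have : w ∈ F.neighborSet v := hw
          rw [L2 v b hvb hvP] at this
          rw [Set.mem_singleton_iff] at this
          subst this
          exact deg2 w v hvb.symm hbP
  · have hmvP : m v ∈ P := ⟨v, hvC, rfl⟩
    obtain ⟨hpos, hall⟩ := Lc (m v) hmvP
    exact ⟨m v, Or.inr (hFadj.mpr (Or.inr (Or.inr ⟨hvC, rfl⟩))), hpos, hall⟩
end

section
/- Every factor-critical finite simple graph G with more than one vertex has a fractional perfect matching f with f(e) ∈ {0, 1/2, 1} for every edge e, such that the set of edges with f-value 1/2 forms exactly one odd cycle. -/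
open Finset

namespace SCFAux

open SimpleGraph

variable {V : Type*}

/-- Symmetric difference of two subgraphs, as a simple graph on `V`. -/
def SDG {G : SimpleGraph V} (M M' : G.Subgraph) : SimpleGraph V where
  Adj a b := (M.Adj a b ∧ ¬ M'.Adj a b) ∨ (M'.Adj a b ∧ ¬ M.Adj a b)
  symm := by
    constructor
    intro a b h
    rcases h with ⟨h1, h2⟩ | ⟨h1, h2⟩
    · exact Or.inl ⟨h1.symm, fun hc => h2 hc.symm⟩
    · exact Or.inr ⟨h1.symm, fun hc => h2 hc.symm⟩
  loopless := by
    constructor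
    intro a h
    rcases h with ⟨h1, _⟩ | ⟨h1, _⟩ <;> exact G.loopless.irrefl a (by exact h1.adj_sub)

lemma SDG_adj {G : SimpleGraph V} {M M' : G.Subgraph} {a b : V} :
    (SDG M M').Adj a b ↔ (M.Adj a b ∧ ¬ M'.Adj a b) ∨ (M'.Adj a b ∧ ¬ M.Adj a b) := Iff.rfl

lemma SDG_le {G : SimpleGraph V} {M M' : G.Subgraph} : SDG M M' ≤ G := by
  intro a b h
  rcases h with ⟨h1, _⟩ | ⟨h1, _⟩ <;> exact h1.adj_sub

/-- The vertex set of the `SDG`-component of `v`. -/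
def Kset {G : SimpleGraph V} (M M' : G.Subgraph) (v : V) : Set V :=
  {w | (SDG M M').Reachable v w}

lemma eq_of_reach_no_nbr {D : SimpleGraph V} {v a : V} (h : D.Reachable v a)
    (hn : ∀ x, ¬ D.Adj a x) : a = v := by
  obtain ⟨p⟩ := h
  cases hq : p.reverse with
  | nil => rfl
  | cons h' q => exact absurd h' (hn _)

lemma reach_transfer {D H : SimpleGraph V} {v : V}
    (hDH : ∀ a b, D.Reachable v a → D.Adj a b → H.Adj a b) :
    ∀ {a w : V} (_ : D.Walk a w), D.Reachable v a → H.Reachable a w := by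
  intro a w p
  induction p with
  | nil => intro _; exact Reachable.refl _
  | @cons x y z hxy p ih =>
      intro hx
      exact ((hDH _ _ hx hxy).reachable).trans (ih (hx.trans hxy.reachable))

lemma reach_closed {H : SimpleGraph V} {K : Set V} (hcl : ∀ a b, H.Adj a b → b ∈ K) :
    ∀ {a w : V} (_ : H.Walk a w), a ∈ K → w ∈ K := by
  intro a w p
  induction p with
  | nil => exact id
  | @cons x y z hxy p ih => intro _; exact ih (hcl _ _ hxy)

section Main

variable {G : SimpleGraph V} {M M' : G.Subgraph} {u v : V}

lemma not_adj_left (hMv : M.verts = {v}ᶜ) : ∀ x, ¬ M.Adj v x := by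
  intro x h
  have := M.edge_vert h
  rw [hMv] at this
  exact this rfl

lemma not_adj_right (hMv : M.verts = {v}ᶜ) : ∀ x, ¬ M.Adj x v :=
  fun x h => not_adj_left hMv x h.symm

lemma mem_verts_of_ne (hMv : M.verts = {v}ᶜ) {w : V} (h : w ≠ v) : w ∈ M.verts := by
  rw [hMv]; exact h

lemma crossM (hM : M.IsMatching) (hM' : M'.IsMatching) (hMv : M.verts = {v}ᶜ)
    {a b : V} (hab : M.Adj a b) (ha : a ∈ Kset M M' v) : b ∈ Kset M M' v := by
  by_cases hD : (SDG M M').Adj a b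
  · exact ha.trans hD.reachable
  · have hM'ab : M'.Adj a b := by
      by_contra hc; exact hD (Or.inl ⟨hab, hc⟩)
    have hnonbr : ∀ x, ¬ (SDG M M').Adj a x := by
      intro x hx
      rcases hx with ⟨h1, h2⟩ | ⟨h1, h2⟩
      · have hxb : x = b := (hM (M.edge_vert hab)).unique h1 hab
        rw [hxb] at h2; exact h2 hM'ab
      · have hxb : x = b := (hM' (M'.edge_vert hM'ab)).unique h1 hM'ab
        rw [hxb] at h2; exact h2 hab
    have hav : a = v := eq_of_reach_no_nbr ha hnonbr
    rw [hav] at hab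
    exact absurd hab (not_adj_left hMv b)

lemma crossM' (hM : M.IsMatching) (hM' : M'.IsMatching) (hMv : M.verts = {v}ᶜ)
    {a b : V} (hab : M'.Adj a b) (ha : a ∈ Kset M M' v) : b ∈ Kset M M' v := by
  by_cases hD : (SDG M M').Adj a b
  · exact ha.trans hD.reachable
  · have hMab : M.Adj a b := by
      by_contra hc; exact hD (Or.inr ⟨hab, hc⟩)
    exact crossM hM hM' hMv hMab ha

lemma Dnbr_v (hM' : M'.IsMatching) (hMv : M.verts = {v}ᶜ) (hM'v : M'.verts = {u}ᶜ)
    (huv : u ≠ v) :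
    ∃ v' : V, M'.Adj v v' ∧ (SDG M M').neighborSet v = {v'} := by
  obtain ⟨v', hv', hv'u⟩ := hM' (mem_verts_of_ne hM'v huv.symm)
  refine ⟨v', hv', ?_⟩
  ext x
  simp only [mem_neighborSet, Set.mem_singleton_iff, SDG_adj]
  constructor
  · rintro (⟨h1, _⟩ | ⟨h1, _⟩)
    · exact absurd h1 (not_adj_left hMv x)
    · exact hv'u x h1
  · intro hx
    rw [hx]
    exact Or.inr ⟨hv', not_adj_left hMv v'⟩

lemma nbr_pair (hM : M.IsMatching) (hM' : M'.IsMatching) (hMv : M.verts = {v}ᶜ)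
    (hM'v : M'.verts = {u}ᶜ) {w : V} (hwu : w ≠ u) (hwv : w ≠ v)
    (hw : w ∈ Kset M M' v) :
    ∃ b b' : V, b ≠ b' ∧ M.Adj w b ∧ M'.Adj w b' ∧
      (SDG M M').neighborSet w = {b, b'} := by
  obtain ⟨b, hb, hbu⟩ := hM (mem_verts_of_ne hMv hwv)
  obtain ⟨b', hb', hb'u⟩ := hM' (mem_verts_of_ne hM'v hwu)
  have hne : b ≠ b' := by
    rintro rfl
    -- then w has no D-neighbors, so w = v, contradiction
    have hnonbr : ∀ x, ¬ (SDG M M').Adj w x := by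
      intro x hx
      rcases hx with ⟨h1, h2⟩ | ⟨h1, h2⟩
      · rw [hbu x h1] at h2; exact h2 hb'
      · rw [hb'u x h1] at h2; exact h2 hb
    exact hwv (eq_of_reach_no_nbr hw hnonbr)
  refine ⟨b, b', hne, hb, hb', ?_⟩
  ext x
  simp only [mem_neighborSet, Set.mem_insert_iff, Set.mem_singleton_iff, SDG_adj]
  constructor
  · rintro (⟨h1, _⟩ | ⟨h1, _⟩)
    · exact Or.inl (hbu x h1)
    · exact Or.inr (hb'u x h1)
  · rintro (hx | hx) <;> rw [hx]
    · exact Or.inl ⟨hb, fun hc => hne (hb'u b hc)⟩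
    · exact Or.inr ⟨hb', fun hc => hne ((hbu b' hc).symm)⟩

lemma degree_eq_ncard [Fintype V] {F : SimpleGraph V} [DecidableRel F.Adj] (w : V) :
    F.degree w = (F.neighborSet w).ncard := by
  rw [← SimpleGraph.card_neighborSet_eq_degree, ← Nat.card_coe_set_eq,
    Nat.card_eq_fintype_card]

lemma u_mem_K [Fintype V] [DecidableEq V] (hM : M.IsMatching) (hM' : M'.IsMatching)
    (hMv : M.verts = {v}ᶜ) (hM'v : M'.verts = {u}ᶜ) (huv : u ≠ v) :
    u ∈ Kset M M' v := by
  classical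
  set D := SDG M M' with hD
  let D' : SimpleGraph V :=
    { Adj := fun a b => D.Adj a b ∧ D.Reachable v a ∧ D.Reachable v b
      symm := by constructor; rintro a b ⟨h1, h2, h3⟩; exact ⟨h1.symm, h3, h2⟩
      loopless := by constructor; rintro a ⟨h1, -, -⟩; exact D.loopless.irrefl a h1 }
  haveI : DecidableRel D'.Adj := Classical.decRel _
  have hnbr : ∀ w, D.Reachable v w → D'.neighborSet w = D.neighborSet w := by
    intro w hw
    ext x
    simp only [mem_neighborSet]
    exact ⟨fun h => h.1, fun h => ⟨h, hw, hw.trans h.reachable⟩⟩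
  have hdeg0 : ∀ w, ¬ D.Reachable v w → D'.degree w = 0 := by
    intro w hw
    have hempty : D'.neighborFinset w = ∅ := by
      ext x
      simp only [mem_neighborFinset, Finset.notMem_empty, iff_false]
      exact fun h => hw h.2.1
    rw [← card_neighborFinset_eq_degree, hempty, Finset.card_empty]
  have hdegv : D'.degree v = 1 := by
    obtain ⟨v', hv', hset⟩ := Dnbr_v hM' hMv hM'v huv
    rw [degree_eq_ncard, hnbr v (Reachable.refl v), hD, hset, Set.ncard_singleton]
  have hodd := D'.odd_card_odd_degree_vertices_ne v (by rw [hdegv]; exact odd_one)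
  obtain ⟨w, hwmem⟩ := Finset.card_pos.mp hodd.pos
  rw [Finset.mem_filter] at hwmem
  obtain ⟨-, hwv, hwodd⟩ := hwmem
  have hwreach : D.Reachable v w := by
    by_contra hc
    rw [hdeg0 w hc] at hwodd
    simp [Nat.odd_iff] at hwodd
  by_cases hwu : w = u
  · rw [← hwu]; exact hwreach
  · exfalso
    obtain ⟨b, b', hne, -, -, hset⟩ := nbr_pair hM hM' hMv hM'v hwu hwv hwreach
    rw [degree_eq_ncard, hnbr w hwreach, hD, hset, Set.ncard_pair hne] at hwodd
    simp [Nat.odd_iff] at hwodd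

lemma Dnbr_u (hM : M.IsMatching) (hMv : M.verts = {v}ᶜ) (hM'v : M'.verts = {u}ᶜ)
    (huv : u ≠ v) :
    ∃ u' : V, M.Adj u u' ∧ (SDG M M').neighborSet u = {u'} := by
  obtain ⟨u', hu', hu'uniq⟩ := hM (mem_verts_of_ne hMv huv)
  refine ⟨u', hu', ?_⟩
  ext x
  simp only [mem_neighborSet, Set.mem_singleton_iff, SDG_adj]
  constructor
  · rintro (⟨h1, -⟩ | ⟨h1, -⟩)
    · exact hu'uniq x h1
    · exact absurd h1 (not_adj_left hM'v x)
  · intro hx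
    rw [hx]
    exact Or.inl ⟨hu', not_adj_left hM'v u'⟩

lemma K_odd [Fintype V] [DecidableEq V] (hM : M.IsMatching) (hM' : M'.IsMatching)
    (hMv : M.verts = {v}ᶜ) : Odd (Kset M M' v).ncard := by
  classical
  set K := Kset M M' v with hK
  let N : G.Subgraph :=
    { verts := K \ {v}
      Adj := fun a b => M.Adj a b ∧ a ∈ K \ {v} ∧ b ∈ K \ {v}
      adj_sub := fun h => M.adj_sub h.1
      edge_vert := fun h => h.2.1
      symm := by constructor; rintro a b ⟨h1, h2, h3⟩; exact ⟨h1.symm, h3, h2⟩ }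
  have hNm : N.IsMatching := by
    rintro w hw
    have hwv : w ≠ v := hw.2
    obtain ⟨b, hb, hbu⟩ := hM (mem_verts_of_ne hMv hwv)
    have hbv : b ≠ v := by
      intro h
      rw [h] at hb
      exact not_adj_right hMv w hb
    refine ⟨b, ⟨hb, hw, crossM hM hM' hMv hb hw.1, hbv⟩, ?_⟩
    rintro y ⟨hy, -, -⟩
    exact hbu y hy
  have heven := hNm.even_card
  have hcardeq : (K \ {v} : Set V).ncard = N.verts.toFinset.card :=
    Set.ncard_eq_toFinset_card' _
  have heven' : Even ((K \ {v} : Set V).ncard) := by rw [hcardeq]; exact heven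
  have hvK : v ∈ K := Reachable.refl v
  have hsum : (K \ {v} : Set V).ncard + 1 = K.ncard :=
    Set.ncard_diff_singleton_add_one hvK (Set.toFinite K)
  rw [← hsum]
  exact Even.add_one heven'

end Main

lemma main_aux [Fintype V] [DecidableEq V] (G : SimpleGraph V) [DecidableRel G.Adj]
    (M M' : G.Subgraph) (u v : V) (hM : M.IsMatching) (hMv : M.verts = {v}ᶜ)
    (hM' : M'.IsMatching) (hM'v : M'.verts = {u}ᶜ) (huvG : G.Adj u v) :
    ∃ f : Sym2 V → ℝ, SCF.IsFracMatching G f ∧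
      SCF.weight G f = (Fintype.card V : ℝ) / 2 ∧
      (∀ e : Sym2 V, f e ∈ ({0, 1/2, 1} : Set ℝ)) ∧
      (let H := SimpleGraph.fromEdgeSet {e | f e = 1/2};
        ∃ x, SCF.deg H x = 2 ∧ (∀ w, SCF.deg H w ≠ 0 → H.Reachable x w) ∧
          SCF.IsOddCycleComp H x) := by
  classical
  have huv : u ≠ v := huvG.ne
  set D := SDG M M' with hD
  set K := Kset M M' v with hK
  have hDadj : ∀ a b : V, D.Adj a b ↔ (M.Adj a b ∧ ¬ M'.Adj a b) ∨ (M'.Adj a b ∧ ¬ M.Adj a b) :=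
    fun a b => Iff.rfl
  have hKadj : ∀ a b : V, a ∈ K → D.Adj a b → b ∈ K := fun a b ha h => ha.trans h.reachable
  obtain ⟨v', hv'adj, hvnbr⟩ := Dnbr_v (M := M) hM' hMv hM'v huv
  obtain ⟨u', hu'adj, hunbr⟩ := Dnbr_u (M' := M') hM hMv hM'v huv
  rw [← hD] at hvnbr hunbr
  have huK : u ∈ K := u_mem_K hM hM' hMv hM'v huv
  have hvK : v ∈ K := Reachable.refl v
  have hKodd : Odd K.ncard := K_odd hM hM' hMv
  have hv'u : v' ≠ u := by
    intro h
    have : v' ∈ M'.verts := M'.edge_vert hv'adj.symm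
    rw [h, hM'v] at this
    exact this rfl
  have hu'v : u' ≠ v := by
    intro h
    rw [h] at hu'adj
    exact not_adj_right hMv u hu'adj
  -- the edge set of the odd cycle
  set Hset : Set (Sym2 V) :=
    {e | ∃ a b : V, e = s(a, b) ∧ D.Adj a b ∧ a ∈ K} ∪ {s(u, v)} with hHset
  set f : Sym2 V → ℝ := fun e =>
    if e ∈ Hset then 1/2 else if (e ∈ M.edgeSet ∧ ∀ x ∈ e, x ∉ K) then 1 else 0 with hf
  have hHsetG : ∀ e ∈ Hset, e ∈ G.edgeSet := by
    rintro e (⟨a, b, rfl, hadj, -⟩ | he)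
    · exact SDG_le hadj
    · rw [Set.mem_singleton_iff] at he
      rw [he]
      exact huvG
  have hHsetK : ∀ e ∈ Hset, ∀ x ∈ e, x ∈ K := by
    rintro e (⟨a, b, rfl, hadj, haK⟩ | he) x hx
    · rcases Sym2.mem_iff.1 hx with rfl | rfl
      · exact haK
      · exact hKadj a x haK hadj
    · rw [Set.mem_singleton_iff] at he
      rw [he] at hx
      rcases Sym2.mem_iff.1 hx with rfl | rfl
      · exact huK
      · exact hvK
  have hmem_Hset : ∀ a b : V, s(a, b) ∈ Hset ↔
      (D.Adj a b ∧ a ∈ K) ∨ (a = u ∧ b = v) ∨ (a = v ∧ b = u) := by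
    intro a b
    constructor
    · rintro (⟨c, d, hcd, hadj, hcK⟩ | he)
      · rcases Sym2.eq_iff.1 hcd with ⟨rfl, rfl⟩ | ⟨rfl, rfl⟩
        · exact Or.inl ⟨hadj, hcK⟩
        · exact Or.inl ⟨hadj.symm, hKadj _ _ hcK hadj⟩
      · rw [Set.mem_singleton_iff, Sym2.eq_iff] at he
        rcases he with ⟨rfl, rfl⟩ | ⟨rfl, rfl⟩
        · tauto
        · tauto
    · rintro (⟨hadj, haK⟩ | ⟨rfl, rfl⟩ | ⟨rfl, rfl⟩)
      · exact Or.inl ⟨a, b, rfl, hadj, haK⟩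
      · exact Or.inr rfl
      · exact Or.inr (by rw [Set.mem_singleton_iff, Sym2.eq_iff]; tauto)
  have hfhalf : ∀ e, f e = 1/2 ↔ e ∈ Hset := by
    intro e
    constructor
    · intro h
      by_contra hc
      rw [hf] at h
      simp only [if_neg hc] at h
      split_ifs at h <;> norm_num at h
    · intro h
      rw [hf]
      simp only [if_pos h]
  have hfHset : {e : Sym2 V | f e = 1/2} = Hset := Set.ext hfhalf
  set H := SimpleGraph.fromEdgeSet {e : Sym2 V | f e = 1/2} with hH
  have hHadj : ∀ a b : V, H.Adj a b ↔
      (D.Adj a b ∧ a ∈ K) ∨ (a = u ∧ b = v) ∨ (a = v ∧ b = u) := by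
    intro a b
    rw [hH, SimpleGraph.fromEdgeSet_adj, hfHset]
    constructor
    · rintro ⟨hmem, -⟩
      exact (hmem_Hset a b).1 hmem
    · intro h
      refine ⟨(hmem_Hset a b).2 h, ?_⟩
      rcases h with ⟨hadj, -⟩ | ⟨rfl, rfl⟩ | ⟨rfl, rfl⟩
      · exact (SDG_le hadj).ne
      · exact huv
      · exact huv.symm
  -- neighbor sets of H
  have hHnbr_v : H.neighborSet v = {v', u} := by
    ext x
    simp only [SimpleGraph.mem_neighborSet, hHadj, Set.mem_insert_iff, Set.mem_singleton_iff]
    constructor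
    · rintro (⟨hadj, -⟩ | ⟨h1, -⟩ | ⟨-, rfl⟩)
      · left
        have : x ∈ D.neighborSet v := hadj
        rw [hvnbr] at this
        exact this
      · exact absurd h1.symm huv
      · right; rfl
    · rintro (hx | hx) <;> rw [hx]
      · refine Or.inl ⟨?_, hvK⟩
        show v' ∈ D.neighborSet v
        rw [hvnbr]
        rfl
      · tauto
  have hHnbr_u : H.neighborSet u = {u', v} := by
    ext x
    simp only [SimpleGraph.mem_neighborSet, hHadj, Set.mem_insert_iff, Set.mem_singleton_iff]
    constructor
    · rintro (⟨hadj, -⟩ | ⟨-, rfl⟩ | ⟨h1, -⟩)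
      · left
        have : x ∈ D.neighborSet u := hadj
        rw [hunbr] at this
        exact this
      · right; rfl
      · exact absurd h1 huv
    · rintro (hx | hx) <;> rw [hx]
      · refine Or.inl ⟨?_, huK⟩
        show u' ∈ D.neighborSet u
        rw [hunbr]
        rfl
      · tauto
  have hHnbr_mid : ∀ w, w ∈ K → w ≠ u → w ≠ v → H.neighborSet w = D.neighborSet w := by
    intro w hw hwu hwv
    ext x
    simp only [SimpleGraph.mem_neighborSet, hHadj]
    constructor
    · rintro (⟨hadj, -⟩ | ⟨h1, -⟩ | ⟨h1, -⟩)
      · exact hadj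
      · exact absurd h1 hwu
      · exact absurd h1 hwv
    · intro h
      exact Or.inl ⟨h, hw⟩
  have hHnbr_out : ∀ w, w ∉ K → H.neighborSet w = ∅ := by
    intro w hw
    ext x
    simp only [SimpleGraph.mem_neighborSet, hHadj, Set.mem_empty_iff_false, iff_false]
    rintro (⟨-, h1⟩ | ⟨rfl, -⟩ | ⟨rfl, -⟩)
    · exact hw h1
    · exact hw huK
    · exact hw hvK
  have hHpair : ∀ w ∈ K, ∃ x y : V, x ≠ y ∧ H.neighborSet w = {x, y} := by
    intro w hw
    by_cases hwu : w = u
    · exact ⟨u', v, hu'v, by rw [hwu]; exact hHnbr_u⟩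
    by_cases hwv : w = v
    · exact ⟨v', u, hv'u, by rw [hwv]; exact hHnbr_v⟩
    · obtain ⟨b, b', hne, -, -, hset⟩ := nbr_pair hM hM' hMv hM'v hwu hwv hw
      exact ⟨b, b', hne, by rw [hHnbr_mid w hw hwu hwv, hD, hset]⟩
  have hdegK : ∀ w ∈ K, SCF.deg H w = 2 := by
    intro w hw
    obtain ⟨x, y, hxy, hset⟩ := hHpair w hw
    show (H.neighborSet w).ncard = 2
    rw [hset]
    exact Set.ncard_pair hxy
  have hdeg0 : ∀ w, w ∉ K → SCF.deg H w = 0 := by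
    intro w hw
    show (H.neighborSet w).ncard = 0
    rw [hHnbr_out w hw]
    exact Set.ncard_empty V
  -- reachability
  have hreach : ∀ w ∈ K, H.Reachable v w := by
    intro w hw
    obtain ⟨p⟩ := hw
    exact reach_transfer (fun a b ha hab => (hHadj a b).2 (Or.inl ⟨hab, ha⟩)) p
      (Reachable.refl v)
  have hreach' : ∀ w, H.Reachable v w → w ∈ K := by
    intro w hw
    obtain ⟨p⟩ := hw
    refine reach_closed (fun a b hab => ?_) p hvK
    rcases (hHadj a b).1 hab with ⟨hadj, ha⟩ | ⟨-, rfl⟩ | ⟨-, rfl⟩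
    · exact hKadj a b ha hadj
    · exact hvK
    · exact huK
  have hKreachset : {w | H.Reachable v w} = K := Set.ext fun w => ⟨hreach' w, hreach w⟩
  -- edges of H carry value 1/2 and are G-edges
  have hHedge : ∀ a b : V, H.Adj a b → f s(a, b) = 1/2 ∧ s(a, b) ∈ G.edgeSet := by
    intro a b hab
    have h1 := ((SimpleGraph.fromEdgeSet_adj _).1 hab).1
    exact ⟨h1, hHsetG _ ((hfhalf _).1 h1)⟩
  -- vertex sums
  have hsum : ∀ w : V, ∑ e ∈ G.edgeFinset, (if w ∈ e then f e else 0) = 1 := by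
    intro w
    by_cases hw : w ∈ K
    · obtain ⟨x, y, hxy, hset⟩ := hHpair w hw
      have hax : H.Adj w x := by rw [← SimpleGraph.mem_neighborSet, hset]; exact Or.inl rfl
      have hay : H.Adj w y := by rw [← SimpleGraph.mem_neighborSet, hset]; exact Or.inr rfl
      have hne : (s(w, x) : Sym2 V) ≠ s(w, y) := by
        intro h
        rcases Sym2.eq_iff.1 h with ⟨-, h2⟩ | ⟨h1, h2⟩
        · exact hxy h2
        · exact hxy (h2.trans h1)
      have hfe1 : f s(w, x) = 1/2 := (hHedge w x hax).1
      have hfe2 : f s(w, y) = 1/2 := (hHedge w y hay).1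
      have he1G : (s(w, x) : Sym2 V) ∈ G.edgeFinset :=
        SimpleGraph.mem_edgeFinset.2 (hHedge w x hax).2
      have he2G : (s(w, y) : Sym2 V) ∈ G.edgeFinset :=
        SimpleGraph.mem_edgeFinset.2 (hHedge w y hay).2
      have hsub : ({s(w, x), s(w, y)} : Finset (Sym2 V)) ⊆ G.edgeFinset := by
        intro e he
        rcases Finset.mem_insert.1 he with rfl | he2
        · exact he1G
        · rw [Finset.mem_singleton.1 he2]; exact he2G
      have hpt : ∀ e ∈ G.edgeFinset, (if w ∈ e then f e else 0) =
          (if e ∈ ({s(w, x), s(w, y)} : Finset (Sym2 V)) then f e else 0) := by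
        intro e he
        by_cases hmem : e ∈ ({s(w, x), s(w, y)} : Finset (Sym2 V))
        · rw [if_pos hmem, if_pos]
          rcases Finset.mem_insert.1 hmem with rfl | hmem2
          · exact Sym2.mem_mk_left w x
          · rw [Finset.mem_singleton.1 hmem2]; exact Sym2.mem_mk_left w y
        · rw [if_neg hmem]
          by_cases hwe : w ∈ e
          · rw [if_pos hwe]
            by_contra hfe
            -- f e ≠ 0 means e ∈ Hset or e is an M-edge avoiding K
            have : e ∈ Hset ∨ (e ∈ M.edgeSet ∧ ∀ x ∈ e, x ∉ K) := by
              by_cases h1 : e ∈ Hset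
              · exact Or.inl h1
              by_cases h2 : e ∈ M.edgeSet ∧ ∀ x ∈ e, x ∉ K
              · exact Or.inr h2
              · exfalso
                apply hfe
                rw [hf]
                simp only [if_neg h1, if_neg h2]
            rcases this with hHs | ⟨-, hout⟩
            · -- e is an H-edge at w, so e ∈ {e1, e2}
              obtain ⟨c, hc⟩ := Sym2.mem_iff_exists.1 hwe
              rw [hc] at hHs
              have hwc : w ≠ c := by
                intro h
                have := SimpleGraph.not_isDiag_of_mem_edgeSet G (SimpleGraph.mem_edgeFinset.1 he)
                rw [hc] at this
                exact this (by rw [← h]; exact Sym2.mk_isDiag_iff.2 rfl)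
              have hHwc : H.Adj w c := by
                rw [hH, SimpleGraph.fromEdgeSet_adj, hfHset]
                exact ⟨hHs, hwc⟩
              have hcm : c ∈ H.neighborSet w := hHwc
              rw [hset] at hcm
              apply hmem
              rw [hc]
              rcases hcm with hcx | hcy
              · rw [hcx]; exact Finset.mem_insert_self _ _
              · rw [hcy]; exact Finset.mem_insert.2 (Or.inr (Finset.mem_singleton_self _))
            · exact hout w hwe hw
          · rw [if_neg hwe]
      rw [Finset.sum_congr rfl hpt, Finset.sum_ite_mem, Finset.inter_eq_right.2 hsub,
        Finset.sum_pair hne, hfe1, hfe2]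
      norm_num
    · -- w outside K : unique matching edge
      have hwv : w ≠ v := fun h => hw (h ▸ hvK)
      obtain ⟨b, hb, hbu⟩ := hM (mem_verts_of_ne hMv hwv)
      have hbK : b ∉ K := fun hbK => hw (crossM hM hM' hMv hb.symm hbK)
      have he0M : (s(w, b) : Sym2 V) ∈ M.edgeSet := hb
      have he0Hset : (s(w, b) : Sym2 V) ∉ Hset := by
        intro hmem
        exact hw (hHsetK _ hmem w (Sym2.mem_mk_left w b))
      have hfe0 : f s(w, b) = 1 := by
        rw [hf]
        simp only [if_neg he0Hset]
        rw [if_pos]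
        refine ⟨he0M, ?_⟩
        intro x hx
        rcases Sym2.mem_iff.1 hx with rfl | rfl
        · exact hw
        · exact hbK
      have he0G : (s(w, b) : Sym2 V) ∈ G.edgeFinset :=
        SimpleGraph.mem_edgeFinset.2 (M.edgeSet_subset he0M)
      have hpt : ∀ e ∈ G.edgeFinset, (if w ∈ e then f e else 0) =
          (if e ∈ ({s(w, b)} : Finset (Sym2 V)) then f e else 0) := by
        intro e he
        by_cases hmem : e ∈ ({s(w, b)} : Finset (Sym2 V))
        · rw [if_pos hmem, if_pos]
          rw [Finset.mem_singleton.1 hmem]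
          exact Sym2.mem_mk_left w b
        · rw [if_neg hmem]
          by_cases hwe : w ∈ e
          · rw [if_pos hwe]
            by_contra hfe
            have : e ∈ Hset ∨ (e ∈ M.edgeSet ∧ ∀ x ∈ e, x ∉ K) := by
              by_cases h1 : e ∈ Hset
              · exact Or.inl h1
              by_cases h2 : e ∈ M.edgeSet ∧ ∀ x ∈ e, x ∉ K
              · exact Or.inr h2
              · exfalso
                apply hfe
                rw [hf]
                simp only [if_neg h1, if_neg h2]
            rcases this with hHs | ⟨heM, -⟩
            · exact hw (hHsetK e hHs w hwe)
            · obtain ⟨c, hc⟩ := Sym2.mem_iff_exists.1 hwe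
              rw [hc] at heM
              have hMwc : M.Adj w c := SimpleGraph.Subgraph.mem_edgeSet.1 heM
              have hcb : c = b := hbu c hMwc
              apply hmem
              rw [Finset.mem_singleton, hc, hcb]
          · rw [if_neg hwe]
      rw [Finset.sum_congr rfl hpt, Finset.sum_ite_mem,
        Finset.inter_eq_right.2 (by intro e he; rw [Finset.mem_singleton.1 he]; exact he0G),
        Finset.sum_singleton, hfe0]
  -- total weight
  have hweight : SCF.weight G f = (Fintype.card V : ℝ) / 2 := by
    have h2 : ∀ e ∈ G.edgeFinset, (∑ w : V, if w ∈ e then f e else 0) = 2 * f e := by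
      intro e he
      induction e using Sym2.ind with
      | _ a b =>
        have hab : a ≠ b := by
          intro h
          have := SimpleGraph.not_isDiag_of_mem_edgeSet G (SimpleGraph.mem_edgeFinset.1 he)
          exact this (by rw [← h]; exact Sym2.mk_isDiag_iff.2 rfl)
        have hfil : Finset.univ.filter (fun w => w ∈ s(a, b)) = {a, b} := by
          ext w
          simp [Sym2.mem_iff]
        rw [← Finset.sum_filter, hfil, Finset.sum_const, Finset.card_pair hab]
        ring
    have hswap : ∑ w : V, ∑ e ∈ G.edgeFinset, (if w ∈ e then f e else 0)
        = ∑ e ∈ G.edgeFinset, ∑ w : V, (if w ∈ e then f e else 0) := Finset.sum_comm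
    have hleft : ∑ w : V, ∑ e ∈ G.edgeFinset, (if w ∈ e then f e else 0)
        = (Fintype.card V : ℝ) := by
      rw [Finset.sum_congr rfl (fun w _ => hsum w), Finset.sum_const, Finset.card_univ,
        nsmul_eq_mul, mul_one]
    have hright : ∑ e ∈ G.edgeFinset, ∑ w : V, (if w ∈ e then f e else 0)
        = 2 * SCF.weight G f := by
      rw [Finset.sum_congr rfl h2, ← Finset.mul_sum]
      rfl
    have : (Fintype.card V : ℝ) = 2 * SCF.weight G f := by
      rw [← hleft, hswap, hright]
    linarith
  refine ⟨f, ⟨?_, ?_, ?_⟩, hweight, ?_, ?_⟩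
  · -- bounds
    intro e
    rw [hf]
    dsimp only
    split_ifs <;> norm_num
  · -- support
    intro e he
    rw [hf]
    dsimp only
    rw [if_neg (fun hc => he (hHsetG e hc)), if_neg]
    rintro ⟨h1, -⟩
    exact he (M.edgeSet_subset h1)
  · -- degree bound
    intro w
    rw [hsum w]
  · -- values
    intro e
    rw [hf]
    dsimp only
    split_ifs
    · exact Or.inr (Or.inl rfl)
    · exact Or.inr (Or.inr rfl)
    · exact Or.inl rfl
  · -- the odd cycle
    intro Hl
    refine ⟨v, hdegK v hvK, ?_, ?_, ?_⟩
    · intro w hdw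
      by_contra hc
      exact hdw (hdeg0 w (fun hwK => hc (hreach w hwK)))
    · intro w hr
      exact hdegK w (hreach' w hr)
    · rw [hKreachset]
      exact hKodd


end SCFAux

open SCF

/-- a factor-critical graph on more than one vertex has a fractional perfect
matching with values in `{0, 1/2, 1}` whose half-valued edges form exactly one odd cycle. -/
theorem stmt6 {V : Type*} [Fintype V] [DecidableEq V] (G : SimpleGraph V)
    [DecidableRel G.Adj] (hfc : IsFactorCritical G) (hcard : 1 < Fintype.card V) :
    ∃ f : Sym2 V → ℝ, IsFracMatching G f ∧ weight G f = (Fintype.card V : ℝ) / 2 ∧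
      (∀ e : Sym2 V, f e ∈ ({0, 1/2, 1} : Set ℝ)) ∧
      (let H := SimpleGraph.fromEdgeSet {e | f e = 1/2};
        ∃ v, deg H v = 2 ∧ (∀ w, deg H w ≠ 0 → H.Reachable v w) ∧ IsOddCycleComp H v) := by
  classical
  obtain ⟨v, w0, hvw⟩ := Fintype.exists_pair_of_one_lt_card hcard
  obtain ⟨N, hNv, hNm⟩ := hfc w0
  have hvN : v ∈ N.verts := by rw [hNv]; exact hvw
  obtain ⟨u, hu, -⟩ := hNm hvN
  have huvG : G.Adj u v := (N.adj_sub hu).symm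
  obtain ⟨M, hMv, hM⟩ := hfc v
  obtain ⟨M', hM'v, hM'⟩ := hfc u
  exact SCFAux.main_aux G M M' u v hM hMv hM' hM'v huvG
end
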